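/- arXiv:1309.1619 — 5 statements merged into one kernel-verified Lean document; each statement's English description precedes it below -/
import Mathlib

section
/- Let μ be a Radon measure on ℝ and x ∈ supp μ, and suppose condition (TC) is satisfied at x. Then P({(1−β)δ_{−1} + β·δ_1 : 0 ≤ β ≤ 1}) = 0 for every distribution P in the ω-limit set of T ↦ ⟨μ⟩_{x,T}. -/
open MeasureTheory Filter Topology Set
open scoped ENNReal NNReal

noncomputable section

/-- `I = [-1,1]`. -/
abbrev I01 : Set ℝ := Set.Icc (-1 : ℝ) 1

/-- The window `x + γ·I_t = [x - γe^{-t}, x + γe^{-t}]`. -/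
def window (x γ t : ℝ) : Set ℝ := Set.Icc (x - γ * Real.exp (-t)) (x + γ * Real.exp (-t))

/-- The scenery `μ_{x,t}` as a measure on `I = [-1,1]`:
`A ↦ μ(x + e^{-t}A) / μ(x + I_t)`. -/
def sceneryMeasure (μ : Measure ℝ) (x t : ℝ) : Measure I01 :=
  (μ (window x 1 t))⁻¹ • Measure.comap (fun a : I01 => x + Real.exp (-t) * (a : ℝ)) μ

/-- The scenery `μ_{x,t}` as a Borel probability measure on `I = [-1,1]`
(with an irrelevant junk value if the normalisation fails, which does not
happen when `μ` is Radon and `x ∈ supp μ`, `t ≥ 0`). -/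
def scenery (μ : Measure ℝ) (x t : ℝ) : ProbabilityMeasure I01 := by
  classical
  exact if h : IsProbabilityMeasure (sceneryMeasure μ x t) then ⟨_, h⟩
  else ⟨Measure.dirac ⟨0, by norm_num⟩, inferInstance⟩

/-- `x` belongs to the topological support of `μ`. -/
def MemSupp (μ : Measure ℝ) (x : ℝ) : Prop := ∀ ε > 0, 0 < μ (Set.Ioo (x - ε) (x + ε))

/-- `f` is an orientation-preserving `C¹` diffeomorphism of `ℝ`. -/
def IsOPDiffeo (f : ℝ → ℝ) : Prop :=
  ContDiff ℝ 1 f ∧ Function.Bijective f ∧ ∀ y : ℝ, 0 < deriv f y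

/-- The families of distributions `⟨μ⟩_{x,T}` and `⟨ν⟩_{y,T}` are asymptotic:
`⟨μ⟩_{x,T} - ⟨ν⟩_{y,T} → 0` weak-*, i.e. for every continuous `g : M^□ → ℝ`,
`(1/T) ∫_0^T (g(μ_{x,t}) - g(ν_{y,t})) dt → 0` as `T → ∞`. -/
def DistAsymptotic (μ : Measure ℝ) (x : ℝ) (ν : Measure ℝ) (y : ℝ) : Prop :=
  ∀ g : C(ProbabilityMeasure I01, ℝ),
    Tendsto (fun T : ℝ => (1 / T) * ∫ t in Set.Ioc (0 : ℝ) T,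
      (g (scenery μ x t) - g (scenery ν y t))) atTop (𝓝 0)

/-- Condition (TC) at `x`:
`lim_{K→∞} limsup_{γ→1⁺} limsup_{T→∞} (1/T)·λ({t ∈ [0,T] : μ(x+γI_t)/μ(x+I_t) ≥ K}) = 0`. -/
def CondTC (μ : Measure ℝ) (x : ℝ) : Prop :=
  Tendsto (fun K : ℝ =>
      limsup (fun γ : ℝ =>
          limsup (fun T : ℝ =>
              (1 / T) * (volume {t : ℝ | t ∈ Set.Icc (0 : ℝ) T ∧
                ENNReal.ofReal K ≤ μ (window x γ t) / μ (window x 1 t)}).toReal)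
            atTop)
        (𝓝[>] (1 : ℝ)))
    atTop (𝓝 0)

/-- Borel σ-algebra on the space `M^□` of probability measures on `[-1,1]`
with the weak-* topology. -/
instance : MeasurableSpace (ProbabilityMeasure I01) := borel _

instance : BorelSpace (ProbabilityMeasure I01) := ⟨rfl⟩

/-- The measure `(1-β)·δ_{-1} + β·δ_1` on `[-1,1]`. -/
def bdryCombo (β : ℝ) : Measure I01 :=
  ENNReal.ofReal (1 - β) • Measure.dirac (⟨-1, by norm_num⟩ : I01) +
    ENNReal.ofReal β • Measure.dirac (⟨1, by norm_num⟩ : I01)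

/-- `P` is an ω-limit point of `T ↦ ⟨μ⟩_{x,T}`: there is a sequence `T_k → ∞` with
`⟨μ⟩_{x,T_k} → P` weak-*, i.e. for every continuous `g : M^□ → ℝ`,
`(1/T_k) ∫_0^{T_k} g(μ_{x,t}) dt → ∫ g dP`. -/
def IsOmegaLimitDist (μ : Measure ℝ) (x : ℝ) (P : Measure (ProbabilityMeasure I01)) : Prop :=
  ∃ Tk : ℕ → ℝ, Tendsto Tk atTop atTop ∧
    ∀ g : C(ProbabilityMeasure I01, ℝ),
      Tendsto (fun k => (1 / Tk k) * ∫ t in Set.Ioc (0 : ℝ) (Tk k), g (scenery μ x t)) atTop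
        (𝓝 (∫ ν, g ν ∂P))

/-- `μ` generates the distribution `P` at `x`: `⟨μ⟩_{x,T} → P` weak-* as `T → ∞`. -/
def Generates (μ : Measure ℝ) (x : ℝ) (P : Measure (ProbabilityMeasure I01)) : Prop :=
  ∀ g : C(ProbabilityMeasure I01, ℝ),
    Tendsto (fun T : ℝ => (1 / T) * ∫ t in Set.Ioc (0 : ℝ) T, g (scenery μ x t)) atTop
      (𝓝 (∫ ν, g ν ∂P))


/-!
Suppose an ω-limit distribution `P` gave mass `p > 0` to the measures carried by `{-1, 1}`.
These are exactly where the continuous functional `ν ↦ ∫ (1 - |a|) dν` vanishes, so for every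
`γ > 1` and `K > 0`, along the sequence defining `P` a proportion at least `p` of the sceneries
`μ_{x,t}` give mass `≤ 1/K` to `[-γ⁻¹, γ⁻¹]`. Since `x + γ I_{t + log γ} = x + I_t` and
`x + I_{t + log γ} = x + γ⁻¹ I_t`, each such `t` yields a time `t + log γ` at which
`μ(x + γ I_s) / μ(x + I_s) ≥ K`. Hence the limsup in (TC) is at least `p` for every `K`,
so (TC) forces `p = 0`.
-/

lemma window_add_log (x γ t : ℝ) {s : ℝ} (hs : 0 < s) :
    window x γ (t + Real.log s) = window x (γ / s) t := by
  have hexp : Real.exp (-(t + Real.log s)) = Real.exp (-t) / s := by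
    rw [neg_add, Real.exp_add, Real.exp_neg (Real.log s), Real.exp_log hs, div_eq_mul_inv]
  simp only [window, hexp]
  congr 1 <;> ring

lemma measure_window_ne_top (μ : Measure ℝ) [IsLocallyFiniteMeasure μ] (x γ t : ℝ) :
    μ (window x γ t) ≠ ∞ :=
  isCompact_Icc.measure_lt_top.ne

lemma measure_window_pos {μ : Measure ℝ} {x : ℝ} (hx : MemSupp μ x) (t : ℝ) :
    0 < μ (window x 1 t) :=
  (hx _ (Real.exp_pos _)).trans_le <| measure_mono <| by
    simpa only [window, one_mul] using Ioo_subset_Icc_self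

lemma measurableEmbedding_affine_I01 (x : ℝ) {c : ℝ} (hc : c ≠ 0) :
    MeasurableEmbedding (fun a : I01 => x + c * (a : ℝ)) := by
  refine (Continuous.isClosedEmbedding (by fun_prop) fun a b hab => ?_).measurableEmbedding
  exact Subtype.ext (mul_left_cancel₀ hc (add_left_cancel hab))

lemma sceneryMeasure_preimage_Icc (μ : Measure ℝ) (x t : ℝ) {r : ℝ} (hr : r ≤ 1) :
    sceneryMeasure μ x t (Subtype.val ⁻¹' Icc (-r) r)
      = μ (window x r t) / μ (window x 1 t) := by
  have himage : (fun a : I01 => x + Real.exp (-t) * (a : ℝ)) '' (Subtype.val ⁻¹' Icc (-r) r)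
      = window x r t := by
    have hcomp : (fun a : I01 => x + Real.exp (-t) * (a : ℝ))
        = (fun y => Real.exp (-t) * y + x) ∘ Subtype.val := by
      funext a
      exact add_comm _ _
    rw [hcomp, image_comp, Subtype.image_preimage_val,
      inter_eq_self_of_subset_right (Icc_subset_Icc (by linarith) hr),
      image_affine_Icc' (Real.exp_pos _), window]
    congr 1 <;> ring
  rw [sceneryMeasure, Measure.smul_apply,
    (measurableEmbedding_affine_I01 x (Real.exp_ne_zero _)).comap_apply, himage, smul_eq_mul,
    ENNReal.div_eq_inv_mul]

def largeRatioTimes (μ : Measure ℝ) (x γ K : ℝ) : Set ℝ :=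
  {t | ENNReal.ofReal K ≤ μ (window x γ t) / μ (window x 1 t)}

section Scenery

variable {μ : Measure ℝ} [IsLocallyFiniteMeasure μ] {x : ℝ}

lemma isProbabilityMeasure_sceneryMeasure (hx : MemSupp μ x) (t : ℝ) :
    IsProbabilityMeasure (sceneryMeasure μ x t) := by
  have huniv : (univ : Set I01) = Subtype.val ⁻¹' Icc (-1) 1 := by
    ext a
    simp
  refine ⟨?_⟩
  rw [huniv, sceneryMeasure_preimage_Icc μ x t le_rfl,
    ENNReal.div_self (measure_window_pos hx t).ne' (measure_window_ne_top μ x 1 t)]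

lemma scenery_coe (hx : MemSupp μ x) (t : ℝ) :
    (scenery μ x t : Measure I01) = sceneryMeasure μ x t := by
  simp [scenery, isProbabilityMeasure_sceneryMeasure hx t]

lemma scenery_preimage_Icc (hx : MemSupp μ x) (t : ℝ) {r : ℝ} (hr : r ≤ 1) :
    (scenery μ x t : Measure I01) (Subtype.val ⁻¹' Icc (-r) r)
      = μ (window x r t) / μ (window x 1 t) := by
  rw [scenery_coe hx, sceneryMeasure_preimage_Icc μ x t hr]

lemma add_log_mem_largeRatioTimes (hx : MemSupp μ x) {γ K t : ℝ} (hγ : 1 ≤ γ)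
    (h : (scenery μ x t : Measure I01) (Subtype.val ⁻¹' Icc (-γ⁻¹) γ⁻¹)
      ≤ (ENNReal.ofReal K)⁻¹) :
    t + Real.log γ ∈ largeRatioTimes μ x γ K := by
  have hγ₀ : 0 < γ := by linarith
  rw [scenery_preimage_Icc hx t (inv_le_one_of_one_le₀ hγ)] at h
  rw [largeRatioTimes, mem_ofPred_eq, window_add_log _ _ _ hγ₀, window_add_log _ _ _ hγ₀,
    div_self hγ₀.ne', one_div, ← ENNReal.inv_div (Or.inl (measure_window_ne_top μ x 1 t))
      (Or.inl (measure_window_pos hx t).ne')]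
  exact ENNReal.le_inv_iff_le_inv.mpr h

end Scenery

def distToBoundary : C(I01, ℝ) := ⟨fun a => 1 - |(a : ℝ)|, by fun_prop⟩

lemma distToBoundary_nonneg (a : I01) : 0 ≤ distToBoundary a :=
  sub_nonneg.mpr (abs_le.mpr a.2)

def centralMass (ν : ProbabilityMeasure I01) : ℝ := ∫ a, distToBoundary a ∂ν

lemma continuous_centralMass : Continuous centralMass :=
  ProbabilityMeasure.continuous_integral_continuousMap distToBoundary

lemma integrable_distToBoundary (ν : Measure I01) [IsFiniteMeasure ν] :
    Integrable distToBoundary ν :=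
  distToBoundary.continuous.integrable_of_hasCompactSupport (HasCompactSupport.of_compactSpace _)

lemma centralMass_nonneg (ν : ProbabilityMeasure I01) : 0 ≤ centralMass ν :=
  integral_nonneg distToBoundary_nonneg

lemma centralMass_eq_zero_of_eq_bdryCombo {ν : ProbabilityMeasure I01} {β : ℝ}
    (hν : (ν : Measure I01) = bdryCombo β) : centralMass ν = 0 := by
  rw [centralMass, hν, bdryCombo,
    integral_add_measure ((integrable_distToBoundary _).smul_measure ENNReal.ofReal_ne_top)
      ((integrable_distToBoundary _).smul_measure ENNReal.ofReal_ne_top),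
    integral_smul_measure, integral_smul_measure, integral_dirac, integral_dirac]
  simp [distToBoundary]

lemma sub_mul_measureReal_Icc_le_centralMass (ν : ProbabilityMeasure I01) {r : ℝ}
    (hr : r ≤ 1) :
    (1 - r) * (ν : Measure I01).real (Subtype.val ⁻¹' Icc (-r) r) ≤ centralMass ν := by
  refine le_trans ?_ (mul_meas_ge_le_integral_of_nonneg
    (ae_of_all _ distToBoundary_nonneg) (integrable_distToBoundary _) (1 - r))
  refine mul_le_mul_of_nonneg_left (measureReal_mono fun a ha => ?_) (sub_nonneg.mpr hr)
  have : |(a : ℝ)| ≤ r := abs_le.mpr ha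
  show 1 - r ≤ 1 - |(a : ℝ)|
  linarith

lemma measure_Icc_le_of_centralMass_lt {ν : ProbabilityMeasure I01} {r K : ℝ} (hr : r < 1)
    (hK : 0 < K) (h : centralMass ν < (1 - r) / K) :
    (ν : Measure I01) (Subtype.val ⁻¹' Icc (-r) r) ≤ (ENNReal.ofReal K)⁻¹ := by
  have hmass : (ν : Measure I01).real (Subtype.val ⁻¹' Icc (-r) r) ≤ K⁻¹ := by
    refine le_of_mul_le_mul_left ?_ (sub_pos.mpr hr)
    calc (1 - r) * (ν : Measure I01).real (Subtype.val ⁻¹' Icc (-r) r)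
        ≤ centralMass ν := sub_mul_measureReal_Icc_le_centralMass ν hr.le
      _ ≤ (1 - r) * K⁻¹ := by rw [← div_eq_mul_inv]; exact h.le
  rw [← ENNReal.ofReal_inv_of_pos hK, ← ofReal_measureReal (measure_ne_top _ _)]
  exact ENNReal.ofReal_le_ofReal hmass

def boundaryTest (η : ℝ) : C(ProbabilityMeasure I01, ℝ) :=
  ⟨fun ν => max 0 (1 - centralMass ν / η),
    continuous_const.max (continuous_const.sub (continuous_centralMass.div_const η))⟩

lemma boundaryTest_nonneg (η : ℝ) (ν : ProbabilityMeasure I01) : 0 ≤ boundaryTest η ν :=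
  le_max_left _ _

lemma boundaryTest_le_one {η : ℝ} (hη : 0 ≤ η) (ν : ProbabilityMeasure I01) :
    boundaryTest η ν ≤ 1 :=
  max_le zero_le_one (sub_le_self _ (div_nonneg (centralMass_nonneg ν) hη))

lemma centralMass_lt_of_boundaryTest_pos {η : ℝ} (hη : 0 < η) {ν : ProbabilityMeasure I01}
    (h : 0 < boundaryTest η ν) : centralMass ν < η := by
  have : 0 < 1 - centralMass ν / η := by
    simpa [boundaryTest] using h
  rwa [sub_pos, div_lt_one hη] at this

def boundaryCombos : Set (ProbabilityMeasure I01) :=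
  {ν | ∃ β ∈ Icc (0 : ℝ) 1, (ν : Measure I01) = bdryCombo β}

lemma measureReal_boundaryCombos_le_integral (P : Measure (ProbabilityMeasure I01))
    [IsProbabilityMeasure P] {η : ℝ} (hη : 0 ≤ η) :
    P.real boundaryCombos ≤ ∫ ν, boundaryTest η ν ∂P := by
  have hint : Integrable (boundaryTest η) P :=
    Integrable.of_bound (boundaryTest η).continuous.aestronglyMeasurable 1 <| ae_of_all _
      fun ν => by
        rw [Real.norm_eq_abs, abs_of_nonneg (boundaryTest_nonneg η ν)]
        exact boundaryTest_le_one hη ν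
  have hsub : boundaryCombos ⊆ {ν | 1 ≤ boundaryTest η ν} := by
    rintro ν ⟨β, -, hν⟩
    simp [boundaryTest, centralMass_eq_zero_of_eq_bdryCombo hν]
  calc P.real boundaryCombos ≤ 1 * P.real {ν | 1 ≤ boundaryTest η ν} := by
        rw [one_mul]; exact measureReal_mono hsub
    _ ≤ ∫ ν, boundaryTest η ν ∂P :=
        mul_meas_ge_le_integral_of_nonneg (ae_of_all _ (boundaryTest_nonneg η)) hint 1

def timeDensity (S : Set ℝ) (T : ℝ) : ℝ := (1 / T) * volume.real (Icc 0 T ∩ S)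

lemma condTC_iff {μ : Measure ℝ} {x : ℝ} :
    CondTC μ x ↔ Tendsto (fun K => limsup (fun γ =>
      limsup (timeDensity (largeRatioTimes μ x γ K)) atTop) (𝓝[>] 1)) atTop (𝓝 0) :=
  Iff.rfl

lemma timeDensity_mem_Icc (S : Set ℝ) (T : ℝ) : timeDensity S T ∈ Icc 0 1 := by
  rcases le_or_gt T 0 with hT | hT
  · have hnull : volume (Icc 0 T ∩ S) = 0 := by
      refine measure_mono_null inter_subset_left ?_
      rw [Real.volume_Icc, ENNReal.ofReal_eq_zero]
      linarith
    simp [timeDensity, Measure.real, hnull]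
  · have hle : volume.real (Icc 0 T ∩ S) ≤ T := by
      calc volume.real (Icc 0 T ∩ S) ≤ volume.real (Icc 0 T) :=
            measureReal_mono inter_subset_left measure_Icc_lt_top.ne
        _ = T := by rw [Real.volume_real_Icc_of_le hT.le, sub_zero]
    refine ⟨mul_nonneg (by positivity) measureReal_nonneg, ?_⟩
    rw [timeDensity, one_div_mul_eq_div, div_le_one hT]
    exact hle

lemma isBoundedUnder_le_timeDensity (S : Set ℝ) (l : Filter ℝ) :
    l.IsBoundedUnder (· ≤ ·) (timeDensity S) :=
  isBoundedUnder_of ⟨1, fun T => (timeDensity_mem_Icc S T).2⟩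

lemma limsup_timeDensity_le_one (S : Set ℝ) (l : Filter ℝ) [l.NeBot] :
    limsup (timeDensity S) l ≤ 1 :=
  limsup_le_of_le (isCoboundedUnder_le_of_le l fun T => (timeDensity_mem_Icc S T).1)
    (Eventually.of_forall fun T => (timeDensity_mem_Icc S T).2)

lemma setIntegral_Ioc_le_measureReal_Icc_inter {f : ℝ → ℝ} {S : Set ℝ} {c T : ℝ}
    (hf : ∀ t, f t ≤ 1) (hS : ∀ t, 0 < f t → t + c ∈ S) (hc : 0 ≤ c) :
    ∫ t in Ioc 0 T, f t ≤ volume.real (Icc 0 (T + c) ∩ S) := by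
  have hpos : ENNReal.ofReal (∫ t in Ioc 0 T, f t) ≤ volume ({t | 0 < f t} ∩ Ioc 0 T) := by
    rw [← Measure.restrict_apply' measurableSet_Ioc]
    exact integral_le_measure (fun t _ => hf t) fun t ht => not_lt.mp ht
  have hshift : {t | 0 < f t} ∩ Ioc 0 T ⊆ (· + c) ⁻¹' (Icc 0 (T + c) ∩ S) :=
    fun t ⟨hft, ht₀, htT⟩ => ⟨⟨by linarith, by linarith⟩, hS t hft⟩
  have hfin : volume (Icc 0 (T + c) ∩ S) ≠ ∞ :=
    measure_ne_top_of_subset inter_subset_left measure_Icc_lt_top.ne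
  exact (ENNReal.ofReal_le_iff_le_toReal hfin).mp <|
    hpos.trans ((measure_mono hshift).trans_eq (measure_preimage_add_right _ _ _))

lemma le_limsup_timeDensity {f : ℝ → ℝ} {S : Set ℝ} {c L : ℝ} {Tk : ℕ → ℝ}
    (hTk : Tendsto Tk atTop atTop) (hf : ∀ t, f t ≤ 1) (hS : ∀ t, 0 < f t → t + c ∈ S)
    (hc : 0 ≤ c)
    (hL : Tendsto (fun k => (1 / Tk k) * ∫ t in Ioc 0 (Tk k), f t) atTop (𝓝 L)) :
    L ≤ limsup (timeDensity S) atTop := by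
  have hlower : ∀ᶠ k in atTop,
      (1 + c / Tk k)⁻¹ * ((1 / Tk k) * ∫ t in Ioc 0 (Tk k), f t)
        ≤ timeDensity S (Tk k + c) := by
    filter_upwards [hTk.eventually_gt_atTop 0] with k hk
    calc (1 + c / Tk k)⁻¹ * ((1 / Tk k) * ∫ t in Ioc 0 (Tk k), f t)
        = (1 / (Tk k + c)) * ∫ t in Ioc 0 (Tk k), f t := by field_simp
      _ ≤ timeDensity S (Tk k + c) := by
        rw [timeDensity]
        exact mul_le_mul_of_nonneg_left
          (setIntegral_Ioc_le_measureReal_Icc_inter hf hS hc) (by positivity)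
  have hfactor : Tendsto (fun k => (1 + c / Tk k)⁻¹) atTop (𝓝 1) := by
    simpa using (tendsto_const_nhds.add (tendsto_const_nhds.div_atTop hTk)).inv₀
      (by norm_num : (1 : ℝ) + 0 ≠ 0)
  refine le_of_forall_lt_imp_le_of_dense fun L' hL' => le_limsup_of_frequently_le ?_
    (isBoundedUnder_le_timeDensity S atTop)
  have hbelow := (hfactor.mul hL).eventually (lt_mem_nhds (by rwa [one_mul]))
  exact (tendsto_atTop_add_const_right _ c hTk).frequently
    ((hbelow.and hlower).mono fun k hk => hk.1.le.trans hk.2).frequently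

lemma measureReal_boundaryCombos_le_limsup_timeDensity {μ : Measure ℝ}
    [IsLocallyFiniteMeasure μ] {x : ℝ} (hx : MemSupp μ x) {P : Measure (ProbabilityMeasure I01)}
    [IsProbabilityMeasure P] (hP : IsOmegaLimitDist μ x P) {γ K : ℝ} (hγ : 1 < γ)
    (hK : 0 < K) :
    P.real boundaryCombos ≤ limsup (timeDensity (largeRatioTimes μ x γ K)) atTop := by
  obtain ⟨Tk, hTk, hconv⟩ := hP
  have hη : 0 < (1 - γ⁻¹) / K := div_pos (sub_pos.mpr (inv_lt_one_of_one_lt₀ hγ)) hK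
  refine (measureReal_boundaryCombos_le_integral P hη.le).trans <|
    le_limsup_timeDensity hTk (fun t => boundaryTest_le_one hη.le _) (fun t ht => ?_)
      (Real.log_nonneg hγ.le) (hconv _)
  exact add_log_mem_largeRatioTimes hx hγ.le <| measure_Icc_le_of_centralMass_lt
    (inv_lt_one_of_one_lt₀ hγ) hK (centralMass_lt_of_boundaryTest_pos hη ht)

/-- If `μ` satisfies condition (TC) at `x ∈ supp μ`, then every ω-limit point
`P` of `T ↦ ⟨μ⟩_{x,T}` gives zero mass to `{(1-β)δ_{-1} + βδ_1 : 0 ≤ β ≤ 1}`. -/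
theorem omegaLimit_null_of_TC
    (μ : Measure ℝ) [IsLocallyFiniteMeasure μ] (x : ℝ) (hx : MemSupp μ x)
    (hTC : CondTC μ x) :
    ∀ P : Measure (ProbabilityMeasure I01), IsProbabilityMeasure P →
      IsOmegaLimitDist μ x P →
      P {ν : ProbabilityMeasure I01 |
          ∃ β ∈ Set.Icc (0 : ℝ) 1, (ν : Measure I01) = bdryCombo β} = 0 := by
  intro P _ hP
  have hbound : ∀ K > 0, P.real boundaryCombos ≤ limsup (fun γ =>
      limsup (timeDensity (largeRatioTimes μ x γ K)) atTop) (𝓝[>] 1) := fun K hK =>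
    le_limsup_of_frequently_le
      ((eventually_mem_nhdsWithin : ∀ᶠ γ in 𝓝[>] (1 : ℝ), γ ∈ Ioi 1).mono fun γ hγ =>
        measureReal_boundaryCombos_le_limsup_timeDensity hx hP hγ hK).frequently
      (isBoundedUnder_of ⟨1, fun γ => limsup_timeDensity_le_one _ atTop⟩)
  have hnull : P.real boundaryCombos ≤ 0 :=
    ge_of_tendsto (condTC_iff.mp hTC) ((eventually_gt_atTop 0).mono hbound)
  exact (measureReal_eq_zero_iff).mp (hnull.antisymm measureReal_nonneg)
end
end

section
/- Let h : [0,∞) → [0,∞) be a decreasing function and let ε > 0, α > 0 and T ≥ ε. Then λ({t ∈ [ε, T] : h(t−ε) − h(t) ≥ α}) ≤ (ε/α)·(h(0) − h(T)), where λ is Lebesgue measure. -/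
open MeasureTheory Set

/-!
Extend `h` to an antitone function `H` on all of `ℝ`. By Markov's inequality the set has measure at
most `α⁻¹ ∫_ε^T (H(t-ε) - H(t)) dt`, and this integral telescopes to
`∫_0^ε H - ∫_{T-ε}^T H ≤ ε H(0) - ε H(T)`.
-/

theorem AntitoneOn.antitone_comp_max {α β : Type*} [LinearOrder α] [Preorder β] {f : α → β}
    {c : α} (hf : AntitoneOn f (Ici c)) : Antitone fun x => f (max x c) :=
  fun _ _ hst => hf (le_max_right _ _) (le_max_right _ _) (max_le_max_right c hst)

theorem Antitone.comp_sub_const {α β : Type*} [AddGroup α] [Preorder α] [AddRightMono α]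
    [Preorder β] {f : α → β} (hf : Antitone f) (c : α) : Antitone fun x => f (x - c) :=
  fun _ _ hxy => hf (sub_le_sub_right hxy c)

theorem Antitone.intervalIntegral_sub_comp_sub_le {H : ℝ → ℝ} (hH : Antitone H) {ε : ℝ}
    (hε : 0 ≤ ε) (a b : ℝ) :
    ∫ t in a..b, (H (t - ε) - H t) ≤ ε * (H (a - ε) - H b) := by
  have hint : ∀ x y : ℝ, IntervalIntegrable H volume x y := fun _ _ => hH.intervalIntegrable
  have htelescope : ∫ t in a..b, (H (t - ε) - H t)
      = (∫ t in (a - ε)..a, H t) - ∫ t in (b - ε)..b, H t := by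
    rw [intervalIntegral.integral_sub (hH.comp_sub_const ε).intervalIntegrable (hint a b),
      intervalIntegral.integral_comp_sub_right H ε,
      ← intervalIntegral.integral_add_adjacent_intervals (hint (a - ε) a) (hint a (b - ε)),
      ← intervalIntegral.integral_add_adjacent_intervals (hint a (b - ε)) (hint (b - ε) b)]
    ring
  have hleft : ∫ t in (a - ε)..a, H t ≤ ε * H (a - ε) := by
    simpa using intervalIntegral.integral_mono_on (by linarith) (hint (a - ε) a)
      intervalIntegrable_const fun x hx => hH hx.1
  have hright : ε * H b ≤ ∫ t in (b - ε)..b, H t := by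
    simpa using intervalIntegral.integral_mono_on (by linarith) intervalIntegrable_const
      (hint (b - ε) b) fun x hx => hH hx.2
  linarith

theorem Antitone.volume_le_sub_comp_sub_le {H : ℝ → ℝ} (hH : Antitone H) {ε α a b : ℝ}
    (hε : 0 ≤ ε) (hα : 0 < α) (hab : a ≤ b) :
    volume {t | t ∈ Icc a b ∧ α ≤ H (t - ε) - H t} ≤
      ENNReal.ofReal (ε / α * (H (a - ε) - H b)) := by
  set g : ℝ → ℝ := fun t => H (t - ε) - H t
  have hg_nonneg : ∀ t, 0 ≤ g t := fun t => sub_nonneg.2 (hH (by linarith))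
  have hg_int : IntegrableOn g (Icc a b) :=
    ((hH.comp_sub_const ε).locallyIntegrable.sub
      hH.locallyIntegrable).integrableOn_isCompact isCompact_Icc
  have hmarkov : α * (volume.restrict (Icc a b)).real {t | α ≤ g t} ≤ ∫ t in Icc a b, g t :=
    mul_meas_ge_le_integral_of_nonneg (ae_of_all _ hg_nonneg) hg_int α
  have hintegral : ∫ t in Icc a b, g t ≤ ε * (H (a - ε) - H b) := by
    rw [integral_Icc_eq_integral_Ioc, ← intervalIntegral.integral_of_le hab]
    exact hH.intervalIntegral_sub_comp_sub_le hε a b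
  have hset : {t | t ∈ Icc a b ∧ α ≤ g t} = {t | α ≤ g t} ∩ Icc a b := by
    ext t; simp [and_comm]
  rw [hset, ← Measure.restrict_apply' measurableSet_Icc, ← ofReal_measureReal]
  refine ENNReal.ofReal_le_ofReal ?_
  rw [div_mul_eq_mul_div, le_div_iff₀ hα, mul_comm]
  linarith

theorem measure_decrement_set_le_general (h : ℝ → ℝ)
    (hmono : AntitoneOn h (Set.Ici (0 : ℝ)))
    (ε α T : ℝ) (hε : 0 < ε) (hα : 0 < α) (hT : ε ≤ T) :
    volume {t : ℝ | t ∈ Set.Icc ε T ∧ α ≤ h (t - ε) - h t} ≤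
      ENNReal.ofReal ((ε / α) * (h 0 - h T)) := by
  set H : ℝ → ℝ := fun t => h (max t 0) with hH_def
  have hH_eq : ∀ t, 0 ≤ t → H t = h t := fun t ht => by simp [hH_def, max_eq_left ht]
  have hset : {t : ℝ | t ∈ Icc ε T ∧ α ≤ h (t - ε) - h t}
      = {t | t ∈ Icc ε T ∧ α ≤ H (t - ε) - H t} := by
    ext t
    simp only [mem_ofPred_eq, and_congr_right_iff]
    intro ht
    rw [hH_eq _ (sub_nonneg.2 ht.1), hH_eq _ (hε.le.trans ht.1)]
  have hbound := hmono.antitone_comp_max.volume_le_sub_comp_sub_le hε.le hα hT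
  rwa [hset, ← hH_eq 0 le_rfl, ← hH_eq T (hε.le.trans hT), ← sub_self ε]

/-- If `h : [0,∞) → [0,∞)` is decreasing, `ε > 0`, `α > 0` and `T ≥ ε`, then
`λ({t ∈ [ε,T] : h(t-ε) - h(t) ≥ α}) ≤ (ε/α)·(h(0) - h(T))`. -/
theorem measure_decrement_set_le (h : ℝ → ℝ)
    (hmono : AntitoneOn h (Set.Ici (0 : ℝ))) (hnonneg : ∀ t ∈ Set.Ici (0 : ℝ), 0 ≤ h t)
    (ε α T : ℝ) (hε : 0 < ε) (hα : 0 < α) (hT : ε ≤ T) :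
    volume {t : ℝ | t ∈ Set.Icc ε T ∧ α ≤ h (t - ε) - h t} ≤
      ENNReal.ofReal ((ε / α) * (h 0 - h T)) :=
  measure_decrement_set_le_general h hmono ε α T hε hα hT
end

section
/- There exist a Radon measure μ on ℝ with 0 ∈ supp μ and an orientation-preserving C¹ diffeomorphism f : ℝ → ℝ with f(0) = 0 and f'(0) = 1 such that the sceneries μ_{0,t} and (fμ)_{0,t} are not asymptotic, i.e. μ_{0,t} − (fμ)_{0,t} does not converge to 0 in the weak-* sense as t → ∞. (For example, μ = Σ_{k=1}^∞ 2^{−k} δ_{2^{−k}} and f with f^{−1}(x) = x − x³ near 0.) -/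
open MeasureTheory Filter Topology Set
open scoped ENNReal NNReal

noncomputable section

/-!
Take `μ = ∑ₖ 2⁻ᵏ δ_{e^{-k}}` and `f x = x + x³`. At time `t = n` the window is `[-e^{-n}, e^{-n}]`
and the atom `e^{-n}`, carrying half of the mass of the window, sits at the right endpoint `1` of
the scenery `μ_{0,n}`. The map `f` pushes this atom just outside the window, while it moves the
atoms `e^{-k}`, `k > n`, only by a factor `1 + e^{-2k}`, so they stay in the left half `[0, 1/2)`
of `(fμ)_{0,n}`. A continuous test function that vanishes on `[-1, 1/2]` and equals `1` on
`[3/4, 1]` therefore separates the two sceneries by `1/2` at every integer time.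
-/

namespace SceneryExample

section Scenery

variable (μ : Measure ℝ) (x t : ℝ)

def sceneryEmbedding (a : I01) : ℝ := x + Real.exp (-t) * a

lemma measurableEmbedding_sceneryEmbedding : MeasurableEmbedding (sceneryEmbedding x t) := by
  refine (Continuous.isClosedEmbedding (by unfold sceneryEmbedding; fun_prop)
    fun a b hab => ?_).measurableEmbedding
  exact Subtype.ext (mul_left_cancel₀ (Real.exp_ne_zero _) (add_left_cancel hab))

lemma image_sceneryEmbedding_setOf_le {r : ℝ} (hr : -1 ≤ r) :
    sceneryEmbedding x t '' {a | r ≤ (a : ℝ)} =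
      Icc (x + Real.exp (-t) * r) (x + Real.exp (-t)) := by
  have hexp := Real.exp_pos (-t)
  ext y
  simp only [sceneryEmbedding, mem_image, mem_ofPred_eq, mem_Icc]
  constructor
  · rintro ⟨a, hra, rfl⟩
    exact ⟨by gcongr, by nlinarith [a.2.2]⟩
  · rintro ⟨hlo, hhi⟩
    refine ⟨⟨(y - x) / Real.exp (-t), ?_, ?_⟩, ?_, ?_⟩
    · rw [le_div_iff₀ hexp]; nlinarith
    · rw [div_le_one hexp]; linarith
    · rw [le_div_iff₀ hexp]; linarith
    · field_simp; ring

lemma sceneryMeasure_apply (S : Set I01) :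
    sceneryMeasure μ x t S = (μ (window x 1 t))⁻¹ * μ (sceneryEmbedding x t '' S) := by
  rw [sceneryMeasure, Measure.smul_apply, smul_eq_mul]
  exact congrArg _ ((measurableEmbedding_sceneryEmbedding x t).comap_apply μ S)

lemma coe_scenery_eq_sceneryMeasure (h0 : μ (window x 1 t) ≠ 0) (hfin : μ (window x 1 t) ≠ ∞) :
    (scenery μ x t : Measure I01) = sceneryMeasure μ x t := by
  have : IsProbabilityMeasure (sceneryMeasure μ x t) := by
    constructor
    have huniv : {a : I01 | -1 ≤ (a : ℝ)} = univ := eq_univ_of_forall fun a => a.2.1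
    rw [sceneryMeasure_apply, ← huniv, image_sceneryEmbedding_setOf_le x t le_rfl, mul_neg_one,
      ← sub_eq_add_neg, ← one_mul (Real.exp (-t))]
    exact ENNReal.inv_mul_cancel h0 hfin
  simp [scenery, this]

end Scenery

section Ramp

def ramp : C(I01, ℝ) :=
  ⟨fun a => max 0 (min 1 (4 * (a : ℝ) - 2)), by fun_prop⟩

lemma ramp_eq_one {a : I01} (ha : 3 / 4 ≤ (a : ℝ)) : ramp a = 1 := by
  simp only [ramp, ContinuousMap.coe_mk]
  rw [min_eq_left (by linarith), max_eq_right zero_le_one]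

lemma ramp_eq_zero {a : I01} (ha : (a : ℝ) ≤ 1 / 2) : ramp a = 0 := by
  simp only [ramp, ContinuousMap.coe_mk]
  exact max_eq_left ((min_le_right _ _).trans (by linarith))

lemma ramp_nonneg (a : I01) : 0 ≤ ramp a := le_max_left _ _

variable (m : Measure I01)

lemma measureReal_le_integral_ramp [IsFiniteMeasure m] :
    m.real {a | 3 / 4 ≤ (a : ℝ)} ≤ ∫ a, ramp a ∂m := by
  have hS : MeasurableSet {a : I01 | 3 / 4 ≤ (a : ℝ)} := measurableSet_le measurable_const
    measurable_subtype_coe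
  rw [← integral_indicator_one hS]
  refine integral_mono ((integrable_const 1).indicator hS)
    (ramp.continuous.integrable_of_hasCompactSupport (.of_compactSpace _)) fun a => ?_
  by_cases ha : a ∈ {a : I01 | 3 / 4 ≤ (a : ℝ)}
  · rw [indicator_of_mem ha, ramp_eq_one ha, Pi.one_apply]
  · rw [indicator_of_notMem ha]
    exact ramp_nonneg a

lemma integral_ramp_eq_zero (hm : m {a | 1 / 2 ≤ (a : ℝ)} = 0) : ∫ a, ramp a ∂m = 0 :=
  integral_eq_zero_of_ae <| (measure_eq_zero_iff_ae_notMem.1 hm).mono fun _ ha =>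
    ramp_eq_zero (not_le.1 ha).le

end Ramp

section AtomicMeasure

lemma sum_smul_dirac_apply {α ι : Type*} [MeasurableSpace α] (w : ι → ℝ≥0∞) (p : ι → α)
    {s : Set α} (hs : MeasurableSet s) :
    Measure.sum (fun i => w i • Measure.dirac (p i)) s = ∑' i, (p ⁻¹' s).indicator w i := by
  rw [Measure.sum_apply _ hs]
  refine tsum_congr fun i => ?_
  rw [Measure.smul_apply, Measure.dirac_apply' _ hs, smul_eq_mul]
  by_cases h : p i ∈ s <;> simp [h]

lemma tsum_indicator_Ici_inv_two_pow (n : ℕ) :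
    ∑' k, (Ici n).indicator (fun k => (2⁻¹ : ℝ≥0∞) ^ k) k = 2⁻¹ ^ n * 2 := by
  rw [← ENNReal.summable.sum_add_tsum_nat_add' (k := n),
    Finset.sum_eq_zero fun k hk => indicator_of_notMem (by simpa using hk) _, zero_add,
    tsum_congr fun k => indicator_of_mem (mem_Ici.2 (Nat.le_add_left n k)) _]
  simp_rw [pow_add]
  rw [ENNReal.tsum_mul_right, ENNReal.tsum_geometric_two, mul_comm]

def atom (k : ℕ) : ℝ := Real.exp (-k)

def atomicMeasure : Measure ℝ :=
  Measure.sum fun k : ℕ => (2⁻¹ : ℝ≥0∞) ^ k • Measure.dirac (atom k)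

def cubicMap (x : ℝ) : ℝ := x + x ^ 3

lemma atom_pos (k : ℕ) : 0 < atom k := Real.exp_pos _

lemma atom_strictAnti : StrictAnti atom := fun _ _ h =>
  Real.exp_lt_exp.2 (neg_lt_neg (Nat.cast_lt.2 h))

lemma lt_cubicMap {x : ℝ} (hx : 0 < x) : x < cubicMap x := by
  unfold cubicMap; linarith [pow_pos hx 3]

/-- `x + x³ ≤ 5x/4` for `x ≤ 1/2`, and `atom k ≤ e⁻¹ · atom n` with `5e⁻¹/4 < 1/2`. -/
lemma cubicMap_atom_lt {n k : ℕ} (h : n < k) : cubicMap (atom k) < atom n / 2 := by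
  have hexp : Real.exp (-1) < 2 / 5 := by
    rw [Real.exp_neg, inv_lt_comm₀ (Real.exp_pos 1) (by norm_num)]
    linarith [Real.exp_one_gt_d9]
  have hk : atom k ≤ atom n * Real.exp (-1) := by
    rw [atom, atom, ← Real.exp_add, Real.exp_le_exp]
    have : (n : ℝ) + 1 ≤ k := by exact_mod_cast h
    linarith
  have hn := atom_pos n
  have hk0 := atom_pos k
  have hn1 : atom n ≤ 1 := Real.exp_le_one_iff.2 (by simp)
  have hk1 : atom k ≤ 1 / 2 := by nlinarith
  have hsq : atom k ^ 2 ≤ 1 / 4 := by nlinarith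
  have hcube : atom k ^ 3 ≤ atom k / 4 := by nlinarith [mul_le_mul_of_nonneg_left hsq hk0.le]
  unfold cubicMap
  nlinarith [mul_lt_mul_of_pos_left hexp hn]

lemma continuous_cubicMap : Continuous cubicMap := by unfold cubicMap; fun_prop

lemma hasDerivAt_cubicMap (x : ℝ) : HasDerivAt cubicMap (1 + 3 * x ^ 2) x :=
  ((hasDerivAt_id' x).add (hasDerivAt_pow 3 x)).congr_deriv (by norm_num)

lemma isOPDiffeo_cubicMap : IsOPDiffeo cubicMap := by
  have hderiv (x : ℝ) : 0 < deriv cubicMap x := by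
    rw [(hasDerivAt_cubicMap x).deriv]; positivity
  refine ⟨by unfold cubicMap; fun_prop, ⟨(strictMono_of_deriv_pos hderiv).injective, ?_⟩, hderiv⟩
  refine continuous_cubicMap.surjective
    (tendsto_atTop_mono' _ ((eventually_ge_atTop 0).mono fun x hx => ?_) tendsto_id)
    (tendsto_atBot_mono' _ ((eventually_le_atBot 0).mono fun x hx => ?_) tendsto_id)
  · simp only [cubicMap, id]; linarith [pow_nonneg hx 3]
  · simp only [cubicMap, id]; linarith [Odd.pow_nonpos (by decide : Odd 3) hx]

lemma atomicMeasure_apply {s : Set ℝ} (hs : MeasurableSet s) :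
    atomicMeasure s = ∑' k, (atom ⁻¹' s).indicator (fun k => (2⁻¹ : ℝ≥0∞) ^ k) k :=
  sum_smul_dirac_apply _ _ hs

lemma inv_two_pow_le_atomicMeasure {s : Set ℝ} (hs : MeasurableSet s) {k : ℕ} (hk : atom k ∈ s) :
    2⁻¹ ^ k ≤ atomicMeasure s := by
  rw [atomicMeasure_apply hs]
  calc (2⁻¹ : ℝ≥0∞) ^ k = (atom ⁻¹' s).indicator (fun k => (2⁻¹ : ℝ≥0∞) ^ k) k :=
        (indicator_of_mem (show k ∈ atom ⁻¹' s from hk) _).symm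
    _ ≤ _ := ENNReal.le_tsum k

instance : IsFiniteMeasure atomicMeasure := by
  constructor
  rw [atomicMeasure_apply MeasurableSet.univ, preimage_univ]
  simp

lemma memSupp_atomicMeasure : MemSupp atomicMeasure 0 := by
  intro ε hε
  have hlim : Tendsto atom atTop (𝓝 0) :=
    Real.tendsto_exp_neg_atTop_nhds_zero.comp tendsto_natCast_atTop_atTop
  obtain ⟨k, hk⟩ := (hlim.eventually (gt_mem_nhds hε)).exists
  refine (ENNReal.pow_pos (by simp) k).trans_le (inv_two_pow_le_atomicMeasure measurableSet_Ioo ?_)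
  constructor <;> linarith [atom_pos k]

lemma atomicMeasure_window_le (n : ℕ) : atomicMeasure (window 0 1 n) ≤ 2⁻¹ ^ n * 2 := by
  rw [atomicMeasure_apply (s := window 0 1 n) measurableSet_Icc, ← tsum_indicator_Ici_inv_two_pow n]
  refine ENNReal.tsum_le_tsum fun k => indicator_le_indicator_of_subset (fun k hk => ?_)
    (fun _ => zero_le) k
  simpa [window, atom] using hk.2

lemma half_le_integral_ramp_scenery_atomicMeasure (n : ℕ) :
    1 / 2 ≤ ∫ a, ramp a ∂(scenery atomicMeasure 0 n : Measure I01) := by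
  have hatom : Real.exp (-(n : ℝ)) = atom n := rfl
  have hW : 2⁻¹ ^ n ≤ atomicMeasure (window 0 1 n) :=
    inv_two_pow_le_atomicMeasure measurableSet_Icc (by simp [hatom, (atom_pos n).le])
  have hmass : 2⁻¹ ≤ (scenery atomicMeasure 0 n : Measure I01) {a | 3 / 4 ≤ (a : ℝ)} := by
    rw [coe_scenery_eq_sceneryMeasure _ _ _ ((ENNReal.pow_pos (by simp) n).trans_le hW).ne'
      (measure_ne_top _ _), sceneryMeasure_apply, image_sceneryEmbedding_setOf_le _ _ (by norm_num),
      hatom]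
    have hpeak : 2⁻¹ ^ n ≤ atomicMeasure (Icc (0 + atom n * (3 / 4)) (0 + atom n)) :=
      inv_two_pow_le_atomicMeasure measurableSet_Icc
        ⟨by linarith [atom_pos n], by rw [zero_add]⟩
    calc (2⁻¹ : ℝ≥0∞) = (2⁻¹ ^ n * 2)⁻¹ * 2⁻¹ ^ n := by
          rw [ENNReal.mul_inv (by simp) (by simp), mul_right_comm,
            ENNReal.inv_mul_cancel (by simp) (by simp), one_mul]
      _ ≤ _ := by gcongr; exact atomicMeasure_window_le n
  calc (1 / 2 : ℝ) = (2⁻¹ : ℝ≥0∞).toReal := by norm_num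
    _ ≤ _ := ENNReal.toReal_mono (measure_ne_top _ _) hmass
    _ ≤ _ := measureReal_le_integral_ramp _

lemma integral_ramp_scenery_map_cubicMap (n : ℕ) :
    ∫ a, ramp a ∂(scenery (atomicMeasure.map cubicMap) 0 n : Measure I01) = 0 := by
  have hatom : Real.exp (-(n : ℝ)) = atom n := rfl
  have hW : 2⁻¹ ^ (n + 1) ≤ atomicMeasure.map cubicMap (window 0 1 n) := by
    rw [Measure.map_apply (s := window 0 1 n) continuous_cubicMap.measurable measurableSet_Icc]
    refine inv_two_pow_le_atomicMeasure
      (measurableSet_Icc.preimage continuous_cubicMap.measurable) ?_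
    have hlo := (atom_pos (n + 1)).trans (lt_cubicMap (atom_pos (n + 1)))
    have hhi := cubicMap_atom_lt (Nat.lt_succ_self n)
    simp only [hatom, mem_preimage, mem_Icc]
    constructor <;> linarith [atom_pos n]
  apply integral_ramp_eq_zero
  rw [coe_scenery_eq_sceneryMeasure _ _ _ ((ENNReal.pow_pos (by simp) _).trans_le hW).ne'
    (measure_ne_top _ _), sceneryMeasure_apply, image_sceneryEmbedding_setOf_le _ _ (by norm_num),
    hatom, Measure.map_apply continuous_cubicMap.measurable measurableSet_Icc,
    atomicMeasure_apply (measurableSet_Icc.preimage continuous_cubicMap.measurable),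
    ENNReal.tsum_eq_zero.2 fun k => indicator_of_notMem ?_ _, mul_zero]
  rintro ⟨hlo, hhi⟩
  rcases le_or_gt k n with hkn | hnk
  · linarith [lt_cubicMap (atom_pos k), atom_strictAnti.antitone hkn]
  · linarith [cubicMap_atom_lt hnk]

end AtomicMeasure

end SceneryExample

open SceneryExample

/-- Example 1: there are a Radon measure `μ` with `0 ∈ supp μ` and an
orientation-preserving `C¹` diffeomorphism `f` with `f(0) = 0`, `f'(0) = 1` such
that the sceneries `μ_{0,t}` and `(fμ)_{0,t}` are not asymptotic. -/
theorem exists_sceneries_not_asymptotic :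
    ∃ μ : Measure ℝ, IsLocallyFiniteMeasure μ ∧ MemSupp μ 0 ∧
      ∃ f : ℝ → ℝ, IsOPDiffeo f ∧ f 0 = 0 ∧ deriv f 0 = 1 ∧
        ¬ (∀ φ : C(I01, ℝ),
            Tendsto (fun t : ℝ => (∫ a, φ a ∂(scenery μ 0 t : Measure I01)) -
                ∫ a, φ a ∂(scenery (Measure.map f μ) 0 t : Measure I01))
              atTop (𝓝 0)) := by
  refine ⟨atomicMeasure, inferInstance, memSupp_atomicMeasure, cubicMap, isOPDiffeo_cubicMap,
    by simp [cubicMap], by rw [(hasDerivAt_cubicMap 0).deriv]; norm_num, fun h => ?_⟩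
  have hlim := (h ramp).comp tendsto_natCast_atTop_atTop
  obtain ⟨n, hn⟩ := (hlim.eventually (gt_mem_nhds (by norm_num : (0 : ℝ) < 1 / 2))).exists
  rw [Function.comp_apply, integral_ramp_scenery_map_cubicMap n] at hn
  linarith [half_le_integral_ramp_scenery_atomicMeasure n]
end
end

section
/- Let μ be the measure on ℝ with μ((−∞,0]) = 0 and μ([0,x]) = e^{−1/x} for all x > 0. Then for every orientation-preserving C¹ diffeomorphism f : ℝ → ℝ, lim_{t→∞} (fμ)_{f(0),t} = δ_1 in the weak-* topology. In particular, for every such f, with s = log f'(0), the sceneries μ_{0,t} and (fμ)_{f(0),t−s} are asymptotic. -/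
open MeasureTheory Filter Topology Set
open scoped ENNReal NNReal

noncomputable section

/-! The mass that `μ` gives to `[u, r]` with `u ≤ 0 < r` is `e^{-1/r}`, and for `fμ` it is
`e^{-1/g(r)}` on `[u, f(0) + r]`, where `g(r) = f⁻¹(f(0) + r) ≈ r / f'(0)`. Hence the scenery at
scale `r = e^{-t}` gives `[-1, s]` the mass `exp(1/g(r) - 1/g(sr)) ≈ exp(-(1/s - 1) / (g'(0) r))`,
which tends to `0` for every `s < 1`: the sceneries concentrate at the right endpoint `1`. -/

open scoped BoundedContinuousFunction

lemma dist_integral_le_add_two_norm_mul {X : Type*} [TopologicalSpace X] [MeasurableSpace X]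
    [OpensMeasurableSpace X] (σ : Measure X) [IsProbabilityMeasure σ] (φ : X →ᵇ ℝ) (p : X)
    {U : Set X} (hU : MeasurableSet U) {η : ℝ} (hη0 : 0 ≤ η)
    (hη : ∀ a ∈ U, dist (φ a) (φ p) ≤ η) :
    dist (∫ a, φ a ∂σ) (φ p) ≤ η + 2 * ‖φ‖ * σ.real Uᶜ := by
  have hint : Integrable (fun a => φ a - φ p) σ := (φ.integrable σ).sub (integrable_const _)
  have hcentre : ∫ a, φ a ∂σ - φ p = ∫ a, (φ a - φ p) ∂σ := by
    rw [integral_sub (φ.integrable σ) (integrable_const _), integral_const, probReal_univ,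
      one_smul]
  rw [dist_eq_norm, hcentre, ← integral_add_compl hU hint]
  calc _ ≤ ‖∫ a in U, (φ a - φ p) ∂σ‖ + ‖∫ a in Uᶜ, (φ a - φ p) ∂σ‖ := norm_add_le _ _
    _ ≤ η * σ.real U + 2 * ‖φ‖ * σ.real Uᶜ := by
      gcongr
      · exact norm_setIntegral_le_of_norm_le_const (measure_lt_top _ _)
          fun a ha => by simpa only [dist_eq_norm] using hη a ha
      · exact norm_setIntegral_le_of_norm_le_const (measure_lt_top _ _)
          fun a _ => by simpa only [dist_eq_norm] using φ.dist_le_two_norm a p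
    _ ≤ η + 2 * ‖φ‖ * σ.real Uᶜ := by
      gcongr
      exact mul_le_of_le_one_right hη0 measureReal_le_one

theorem tendsto_integral_of_tendsto_measureReal_compl {X ι : Type*} [TopologicalSpace X]
    [MeasurableSpace X] [OpensMeasurableSpace X] {l : Filter ι} {σ : ι → ProbabilityMeasure X}
    {p : X} (h : ∀ U, IsOpen U → p ∈ U → Tendsto (fun i => (σ i : Measure X).real Uᶜ) l (𝓝 0))
    (φ : X →ᵇ ℝ) : Tendsto (fun i => ∫ a, φ a ∂(σ i : Measure X)) l (𝓝 (φ p)) := by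
  rw [Metric.tendsto_nhds]
  intro ε hε
  set U := φ ⁻¹' Metric.ball (φ p) (ε / 2)
  have hU : IsOpen U := Metric.isOpen_ball.preimage φ.continuous
  have hsmall : ∀ᶠ i in l, 2 * ‖φ‖ * (σ i : Measure X).real Uᶜ < ε / 2 := by
    have := (h U hU (Metric.mem_ball_self (half_pos hε))).const_mul (2 * ‖φ‖)
    rw [mul_zero] at this
    exact this.eventually_lt_const (half_pos hε)
  filter_upwards [hsmall] with i hi
  calc _ ≤ ε / 2 + 2 * ‖φ‖ * (σ i : Measure X).real Uᶜ :=
        dist_integral_le_add_two_norm_mul _ φ p hU.measurableSet (half_pos hε).le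
          fun a ha => (Metric.mem_ball.1 ha).le
    _ < ε := by linarith

lemma I01.exists_compl_subset_setOf_le {U : Set I01} (hU : IsOpen U)
    (h1 : (⟨1, by norm_num⟩ : I01) ∈ U) :
    ∃ s, 0 < s ∧ s < 1 ∧ Uᶜ ⊆ {a : I01 | (a : ℝ) ≤ s} := by
  obtain ⟨ε, hε, hball⟩ := Metric.isOpen_iff.1 hU _ h1
  refine ⟨max (1 - ε / 2) (1 / 2), by positivity, max_lt (by linarith) (by norm_num), ?_⟩
  intro a ha
  have hfar : ε ≤ dist (a : ℝ) 1 := not_lt.1 fun h => ha (hball h)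
  rw [Real.dist_eq, abs_of_nonpos (by linarith [a.2.2])] at hfar
  exact (show (a : ℝ) ≤ 1 - ε / 2 by linarith).trans (le_max_left _ _)

lemma tendsto_div_comp_mul_nhdsNE {g : ℝ → ℝ} {c : ℝ} (hg : HasDerivAt g c 0) (hg0 : g 0 = 0)
    (hc : c ≠ 0) {b : ℝ} (hb : b ≠ 0) :
    Tendsto (fun r => r / g (b * r)) (𝓝[≠] 0) (𝓝 (c * b)⁻¹) := by
  have hgb : HasDerivAt (fun r => g (b * r)) (c * b) 0 := by
    have hg' : HasDerivAt g c (b * 0) := by rwa [mul_zero]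
    simpa [Function.comp_def] using hg'.comp 0 ((hasDerivAt_id 0).const_mul b)
  refine ((hasDerivAt_iff_tendsto_slope.1 hgb).inv₀ (mul_ne_zero hc hb)).congr fun r => ?_
  simp [slope_def_field, hg0]

theorem tendsto_inv_sub_inv_comp_mul_atBot {g : ℝ → ℝ} {c s : ℝ} (hg : HasDerivAt g c 0)
    (hg0 : g 0 = 0) (hc : 0 < c) (hs0 : 0 < s) (hs1 : s < 1) :
    Tendsto (fun r => (g r)⁻¹ - (g (s * r))⁻¹) (𝓝[>] 0) atBot := by
  have hGT : 𝓝[>] (0 : ℝ) ≤ 𝓝[≠] 0 := nhdsWithin_mono _ fun r hr => ne_of_gt hr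
  have hbracket := ((tendsto_div_comp_mul_nhdsNE hg hg0 hc.ne' one_ne_zero).sub
    (tendsto_div_comp_mul_nhdsNE hg hg0 hc.ne' hs0.ne')).mono_left hGT
  have hneg : (c * 1)⁻¹ - (c * s)⁻¹ < 0 :=
    sub_neg.2 (inv_strictAnti₀ (by positivity) (by nlinarith))
  refine (tendsto_inv_nhdsGT_zero.atTop_mul_neg hneg hbracket).congr' ?_
  filter_upwards [self_mem_nhdsWithin] with r (hr : 0 < r)
  rw [mul_sub, one_mul, ← mul_div_assoc, ← mul_div_assoc, inv_mul_cancel₀ hr.ne', one_div,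
    one_div]

lemma measurableEmbedding_I01_affine (x : ℝ) {r : ℝ} (hr : r ≠ 0) :
    MeasurableEmbedding (fun a : I01 => x + r * (a : ℝ)) :=
  ((Homeomorph.mulLeft₀ r hr).trans (Homeomorph.addLeft x)).measurableEmbedding.comp
    (MeasurableEmbedding.subtype_coe measurableSet_Icc)

lemma I01_affine_image_setOf_le (x : ℝ) {r s : ℝ} (hr : 0 < r) (hs1 : s ≤ 1) :
    (fun a : I01 => x + r * (a : ℝ)) '' {a : I01 | (a : ℝ) ≤ s} = Icc (x - r) (x + s * r) := by
  ext y
  constructor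
  · rintro ⟨a, ha, rfl⟩
    have ha' : (a : ℝ) ≤ s := ha
    constructor <;> nlinarith [a.2.1]
  · rintro ⟨hy1, hy2⟩
    have hm1 : -1 ≤ (y - x) / r := by rw [le_div_iff₀ hr]; linarith
    have hm2 : (y - x) / r ≤ s := by rw [div_le_iff₀ hr]; linarith
    refine ⟨⟨(y - x) / r, hm1, hm2.trans hs1⟩, hm2, ?_⟩
    field_simp
    ring

lemma sceneryMeasure_setOf_le (ν : Measure ℝ) (x t : ℝ) {s : ℝ} (hs1 : s ≤ 1) :
    sceneryMeasure ν x t {a : I01 | (a : ℝ) ≤ s}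
      = ν (Icc (x - Real.exp (-t)) (x + s * Real.exp (-t))) / ν (window x 1 t) := by
  rw [sceneryMeasure, Measure.smul_apply,
    (measurableEmbedding_I01_affine x (Real.exp_pos _).ne').comap_apply,
    I01_affine_image_setOf_le x (Real.exp_pos _) hs1, smul_eq_mul, ENNReal.div_eq_inv_mul]

lemma coe_scenery_eq_sceneryMeasure {ν : Measure ℝ} {x t : ℝ} (h0 : ν (window x 1 t) ≠ 0)
    (htop : ν (window x 1 t) ≠ ∞) : (scenery ν x t : Measure I01) = sceneryMeasure ν x t := by
  have hprob : IsProbabilityMeasure (sceneryMeasure ν x t) := by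
    constructor
    have huniv : (univ : Set I01) = {a : I01 | (a : ℝ) ≤ 1} := by
      ext a
      simpa using a.2.2
    rw [huniv, sceneryMeasure_setOf_le ν x t le_rfl, ← ENNReal.div_self h0 htop]
    simp only [window, one_mul]
  exact congrArg Subtype.val (dif_pos hprob : scenery ν x t = ⟨_, hprob⟩)

section Concentration

variable {ν : Measure ℝ} {x : ℝ} {g : ℝ → ℝ}

lemma measureReal_scenery_setOf_le
    (hν : ∀ u ≤ x, ∀ r > 0, ν (Icc u (x + r)) = ENNReal.ofReal (Real.exp (-(g r)⁻¹)))
    (t : ℝ) {s : ℝ} (hs0 : 0 < s) (hs1 : s ≤ 1) :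
    (scenery ν x t : Measure I01).real {a : I01 | (a : ℝ) ≤ s}
      = Real.exp ((g (Real.exp (-t)))⁻¹ - (g (s * Real.exp (-t)))⁻¹) := by
  have hr := Real.exp_pos (-t)
  have hwindow : ν (window x 1 t) = ENNReal.ofReal (Real.exp (-(g (Real.exp (-t)))⁻¹)) := by
    simp only [window, one_mul]
    rw [hν _ (by linarith) _ hr]
  rw [measureReal_def, coe_scenery_eq_sceneryMeasure (by simp [hwindow, Real.exp_pos])
      (by simp [hwindow]), sceneryMeasure_setOf_le ν x t hs1, hwindow,
    hν _ (by linarith) _ (by positivity), ENNReal.toReal_div, ENNReal.toReal_ofReal (by positivity),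
    ENNReal.toReal_ofReal (by positivity), ← Real.exp_sub]
  congr 1
  ring

theorem tendsto_integral_scenery_of_measure_Icc {c : ℝ} (hc : 0 < c) (hg : HasDerivAt g c 0)
    (hg0 : g 0 = 0)
    (hν : ∀ u ≤ x, ∀ r > 0, ν (Icc u (x + r)) = ENNReal.ofReal (Real.exp (-(g r)⁻¹)))
    (φ : C(I01, ℝ)) :
    Tendsto (fun t => ∫ a, φ a ∂(scenery ν x t : Measure I01)) atTop
      (𝓝 (φ ⟨1, by norm_num⟩)) := by
  have hscale : Tendsto (fun t : ℝ => Real.exp (-t)) atTop (𝓝[>] 0) :=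
    Real.tendsto_exp_atBot_nhdsGT.comp tendsto_neg_atTop_atBot
  have hleft : ∀ s, 0 < s → s < 1 → Tendsto
      (fun t => (scenery ν x t : Measure I01).real {a : I01 | (a : ℝ) ≤ s}) atTop (𝓝 0) := by
    intro s hs0 hs1
    simp_rw [measureReal_scenery_setOf_le hν _ hs0 hs1.le]
    exact Real.tendsto_exp_atBot.comp
      ((tendsto_inv_sub_inv_comp_mul_atBot hg hg0 hc hs0 hs1).comp hscale)
  have hcompl : ∀ U, IsOpen U → (⟨1, by norm_num⟩ : I01) ∈ U →
      Tendsto (fun t => (scenery ν x t : Measure I01).real Uᶜ) atTop (𝓝 0) := by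
    intro U hU h1
    obtain ⟨s, hs0, hs1, hsub⟩ := I01.exists_compl_subset_setOf_le hU h1
    exact tendsto_of_tendsto_of_tendsto_of_le_of_le tendsto_const_nhds (hleft s hs0 hs1)
      (fun _ => measureReal_nonneg) fun _ => measureReal_mono hsub
  simpa using tendsto_integral_of_tendsto_measureReal_compl hcompl
    (BoundedContinuousFunction.mkOfCompact φ)

end Concentration

lemma measure_Icc_eq_of_measure_Iic_eq_zero {μ : Measure ℝ} (h1 : μ (Iic (0 : ℝ)) = 0) {u v : ℝ}
    (hu : u ≤ 0) : μ (Icc u v) = μ (Icc 0 v) := by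
  refine le_antisymm ?_ (measure_mono (Icc_subset_Icc hu le_rfl))
  have hcover : Icc u v ⊆ Iic 0 ∪ Icc 0 v := fun y hy => (le_total y 0).imp id fun h => ⟨h, hy.2⟩
  calc μ (Icc u v) ≤ μ (Iic 0 ∪ Icc 0 v) := measure_mono hcover
    _ ≤ μ (Icc 0 v) := by simpa [h1] using measure_union_le (μ := μ) (Iic 0) (Icc 0 v)

lemma map_orderIso_measure_Icc {μ : Measure ℝ} (h1 : μ (Iic (0 : ℝ)) = 0)
    (h2 : ∀ x : ℝ, 0 < x → μ (Icc 0 x) = ENNReal.ofReal (Real.exp (-(1 / x))))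
    (e : ℝ ≃o ℝ) {u : ℝ} (hu : u ≤ e 0) {r : ℝ} (hr : 0 < r) :
    μ.map e (Icc u (e 0 + r)) = ENNReal.ofReal (Real.exp (-(e.symm (e 0 + r))⁻¹)) := by
  have hv : 0 < e.symm (e 0 + r) := e.lt_symm_apply.2 (by linarith)
  rw [Measure.map_apply e.continuous.measurable measurableSet_Icc, e.preimage_Icc,
    measure_Icc_eq_of_measure_Iic_eq_zero h1 (e.symm_apply_le.2 hu), h2 _ hv, one_div]

lemma hasDerivAt_orderIso_symm_add (e : ℝ ≃o ℝ) {f' : ℝ} (he : HasDerivAt e f' 0)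
    (hf' : f' ≠ 0) : HasDerivAt (fun r => e.symm (e 0 + r)) f'⁻¹ 0 := by
  have hsymm : HasDerivAt e.symm f'⁻¹ (e 0) :=
    HasDerivAt.of_local_left_inverse e.symm.continuous.continuousAt (by simpa using he) hf'
      (Eventually.of_forall e.apply_symm_apply)
  exact HasDerivAt.comp_const_add (e 0) 0 (by simpa using hsymm)

lemma IsOPDiffeo.exists_orderIso {f : ℝ → ℝ} (hf : IsOPDiffeo f) : ∃ e : ℝ ≃o ℝ, ⇑e = f :=
  ⟨StrictMono.orderIsoOfSurjective f (strictMono_of_deriv_pos hf.2.2) hf.2.1.2,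
    StrictMono.coe_orderIsoOfSurjective _ _ _⟩

/-- Example 4: let `μ` be the measure with `μ((-∞,0]) = 0` and
`μ([0,x]) = e^{-1/x}` for `x > 0`.  Then for every orientation-preserving `C¹`
diffeomorphism `f`, `(fμ)_{f(0),t} → δ_1` weak-*; in particular, with
`s = log f'(0)`, the sceneries `μ_{0,t}` and `(fμ)_{f(0),t-s}` are asymptotic. -/
theorem scenery_pushforward_tendsto_dirac_one (μ : Measure ℝ)
    (h1 : μ (Set.Iic (0 : ℝ)) = 0)
    (h2 : ∀ x : ℝ, 0 < x → μ (Set.Icc (0 : ℝ) x) = ENNReal.ofReal (Real.exp (-(1 / x))))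
    (f : ℝ → ℝ) (hf : IsOPDiffeo f) :
    (∀ φ : C(I01, ℝ),
      Tendsto (fun t : ℝ => ∫ a, φ a ∂(scenery (Measure.map f μ) (f 0) t : Measure I01))
        atTop (𝓝 (φ ⟨1, by norm_num⟩))) ∧
    (∀ φ : C(I01, ℝ),
      Tendsto (fun t : ℝ =>
          (∫ a, φ a ∂(scenery μ 0 t : Measure I01)) -
            ∫ a, φ a ∂(scenery (Measure.map f μ) (f 0)
              (t - Real.log (deriv f 0)) : Measure I01))
        atTop (𝓝 0)) := by
  obtain ⟨e, rfl⟩ := hf.exists_orderIso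
  have hderiv : HasDerivAt e (deriv e 0) 0 := (hf.1.differentiable one_ne_zero 0).hasDerivAt
  have hpush : ∀ φ : C(I01, ℝ), Tendsto (fun t => ∫ a, φ a ∂(scenery (μ.map e) (e 0) t :
      Measure I01)) atTop (𝓝 (φ ⟨1, by norm_num⟩)) :=
    tendsto_integral_scenery_of_measure_Icc (inv_pos.2 (hf.2.2 0))
      (hasDerivAt_orderIso_symm_add e hderiv (hf.2.2 0).ne') (by simp)
      fun u hu r hr => map_orderIso_measure_Icc h1 h2 e hu hr
  have hμ : ∀ φ : C(I01, ℝ), Tendsto (fun t => ∫ a, φ a ∂(scenery μ 0 t : Measure I01)) atTop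
      (𝓝 (φ ⟨1, by norm_num⟩)) :=
    tendsto_integral_scenery_of_measure_Icc one_pos (hasDerivAt_id' 0) rfl fun u hu r hr => by
      rw [zero_add, measure_Icc_eq_of_measure_Iic_eq_zero h1 hu, h2 r hr, one_div]
  have hshift : Tendsto (fun t => t - Real.log (deriv e 0)) atTop atTop := by
    simpa only [sub_eq_add_neg, id_eq] using tendsto_atTop_add_const_right _ _ tendsto_id
  refine ⟨hpush, fun φ => ?_⟩
  simpa using (hμ φ).sub ((hpush φ).comp hshift)
end
end

section
/- There exist a Radon measure μ on ℝ with 0 ∈ supp μ and an orientation-preserving C¹ diffeomorphism f : ℝ → ℝ with f(0) = 0 and f'(0) = 1 such that lim_{t→∞} μ_{0,t} = δ_1 and lim_{t→∞} (fμ)_{0,t} = δ_{−1} in the weak-* topology. -/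
open MeasureTheory Filter Topology Set
open scoped ENNReal NNReal

noncomputable section

/-!
Put mass `2^{-n²}` at the `n`-th point of a sequence `z n → 0`. The weights decay so fast that
the first point `z n` of the window `[-e^{-t}, e^{-t}]` outweighs all later points together, so
the scenery is close to the Dirac mass at its relative position `e^t z n`; when consecutive
dominant points have ratio tending to `1`, this position tends to `±1`.

Let the points alternate between `a_k > 0` and `-b_k < 0`, where `b_k = 3 / (2K)`,
`a_k = b_k - K⁻³` and `K = k + 101`, so that `b_{k+1} < a_k < b_k`. The first point in every
window is some `a_k`, hence `μ_{0,t} → δ_1`. The map `f x = x + x² / (2 (1 + x²))` has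
`f'(0) = 1`, but it moves both `-b_k` and `a_{k+1}` to the right by about `9 / (8K²)`, and
together these shifts exceed the gap `b_k - a_{k+1} ≈ 3 / (2K²)`. Hence `|f(-b_k)| < f(a_{k+1})`,
the first image point in every window is negative, and `(fμ)_{0,t} → δ_{-1}`.
-/

section Scenery

variable (x t : ℝ)

lemma mem_window_one_iff {y : ℝ} : y ∈ window x 1 t ↔ |y - x| ≤ Real.exp (-t) := by
  rw [window, mem_Icc, abs_sub_le_iff, one_mul]
  constructor <;> rintro ⟨h₁, h₂⟩ <;> constructor <;> linarith

lemma measurableEmbedding_scenery :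
    MeasurableEmbedding (fun a : I01 => x + Real.exp (-t) * (a : ℝ)) := by
  refine ((by fun_prop : Continuous _).isClosedEmbedding fun a b h => ?_).measurableEmbedding
  exact Subtype.ext (mul_left_cancel₀ (Real.exp_pos _).ne' (add_left_cancel h))

lemma range_scenery : range (fun a : I01 => x + Real.exp (-t) * (a : ℝ)) = window x 1 t := by
  have hw := Real.exp_pos (-t)
  ext y
  rw [mem_window_one_iff, abs_le]
  constructor
  · rintro ⟨⟨a, ha₁, ha₂⟩, rfl⟩
    constructor <;> nlinarith
  · rintro ⟨h₁, h₂⟩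
    refine ⟨⟨(y - x) / Real.exp (-t), ?_, ?_⟩, ?_⟩
    · rwa [le_div_iff₀ hw, neg_one_mul]
    · rwa [div_le_one hw]
    · simp only
      rw [mul_div_cancel₀ _ hw.ne', add_sub_cancel]

variable {μ : Measure ℝ} [IsLocallyFiniteMeasure μ] {x t}

lemma coe_scenery_of_ne_zero (h : μ (window x 1 t) ≠ 0) :
    (scenery μ x t : Measure I01) = sceneryMeasure μ x t := by
  have hprob : IsProbabilityMeasure (sceneryMeasure μ x t) := by
    constructor
    rw [sceneryMeasure, Measure.smul_apply, smul_eq_mul,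
      (measurableEmbedding_scenery x t).comap_apply, image_univ, range_scenery]
    exact ENNReal.inv_mul_cancel h isCompact_Icc.measure_lt_top.ne
  rw [show scenery μ x t = ⟨_, hprob⟩ from dif_pos hprob]
  rfl

lemma scenery_apply_of_ne_zero (h : μ (window x 1 t) ≠ 0) (A : Set I01) :
    (scenery μ x t : Measure I01) A =
      (μ (window x 1 t))⁻¹ * μ ((fun a : I01 => x + Real.exp (-t) * (a : ℝ)) '' A) := by
  rw [coe_scenery_of_ne_zero h, sceneryMeasure, Measure.smul_apply, smul_eq_mul,
    (measurableEmbedding_scenery x t).comap_apply]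

end Scenery

section DiracLimit

variable {ι X : Type*} [TopologicalSpace X] [MeasurableSpace X] [OpensMeasurableSpace X]

lemma tendsto_diracProba_of_tendsto_compl {l : Filter ι} [l.IsCountablyGenerated]
    {ν : ι → ProbabilityMeasure X} {c : X}
    (h : ∀ U ∈ 𝓝 c, Tendsto (fun i => (ν i : Measure X) Uᶜ) l (𝓝 0)) :
    Tendsto ν l (𝓝 (diracProba c)) := by
  refine tendsto_of_forall_isOpen_le_liminf' fun G hG => ?_
  by_cases hc : c ∈ G
  · rcases l.eq_or_neBot with rfl | _
    · simp only [liminf_bot, le_top]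
    have hG_one : Tendsto (fun i => (ν i : Measure X) G) l (𝓝 1) := by
      have := ENNReal.Tendsto.sub tendsto_const_nhds (h G (hG.mem_nhds hc))
        (Or.inl ENNReal.one_ne_top)
      simpa only [tsub_zero, ← prob_compl_eq_one_sub hG.measurableSet.compl, compl_compl]
        using this
    rw [hG_one.liminf_eq]
    exact prob_le_one
  · simp [hG.measurableSet, hc]

lemma tendsto_integral_of_tendsto_diracProba [CompactSpace X] {l : Filter ι}
    {ν : ι → ProbabilityMeasure X} {c : X} (h : Tendsto ν l (𝓝 (diracProba c))) (φ : C(X, ℝ)) :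
    Tendsto (fun i => ∫ a, φ a ∂(ν i : Measure X)) l (𝓝 (φ c)) := by
  have := ProbabilityMeasure.tendsto_iff_forall_integral_tendsto.1 h
    (BoundedContinuousFunction.mkOfCompact φ)
  simpa [diracProba, integral_dirac' _ _ φ.continuous.stronglyMeasurable] using this

end DiracLimit

section AtomicMeasure

variable {α : Type*} [MeasurableSpace α] (z : ℕ → α)

def atomicMeasure : Measure α :=
  Measure.sum fun n => (2⁻¹ : ℝ≥0∞) ^ (n ^ 2) • Measure.dirac (z n)

variable {z}

lemma atomicMeasure_apply {A : Set α} (hA : MeasurableSet A) :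
    atomicMeasure z A = ∑' n, 2⁻¹ ^ (n ^ 2) * A.indicator 1 (z n) := by
  simp only [atomicMeasure, Measure.sum_apply _ hA, Measure.smul_apply, smul_eq_mul,
    Measure.dirac_apply' _ hA]

instance : IsFiniteMeasure (atomicMeasure z) := by
  refine ⟨(atomicMeasure_apply MeasurableSet.univ).trans_lt ?_⟩
  calc ∑' n, 2⁻¹ ^ (n ^ 2) * univ.indicator 1 (z n) ≤ ∑' n : ℕ, (2⁻¹ : ℝ≥0∞) ^ n := by
        refine ENNReal.tsum_le_tsum fun n => ?_
        rw [indicator_univ, Pi.one_apply, mul_one]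
        exact pow_le_pow_of_le_one zero_le (by norm_num) (Nat.le_self_pow two_ne_zero n)
    _ < ⊤ := by simp [ENNReal.tsum_geometric, ENNReal.one_sub_inv_two]

lemma inv_two_pow_sq_le_atomicMeasure {A : Set α} (hA : MeasurableSet A) {n : ℕ}
    (hn : z n ∈ A) : 2⁻¹ ^ (n ^ 2) ≤ atomicMeasure z A := by
  rw [atomicMeasure_apply hA]
  exact le_of_eq_of_le (by rw [indicator_of_mem hn, Pi.one_apply, mul_one]) (ENNReal.le_tsum n)

lemma atomicMeasure_le_of_forall_le_notMem {A : Set α} (hA : MeasurableSet A) {n : ℕ}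
    (h : ∀ m ≤ n, z m ∉ A) : atomicMeasure z A ≤ 2⁻¹ ^ (2 * n) * 2⁻¹ ^ (n ^ 2) := by
  rw [atomicMeasure_apply hA, ← ENNReal.summable.sum_add_tsum_nat_add' (k := n + 1),
    Finset.sum_eq_zero fun m hm => by
      rw [indicator_of_notMem (h m (Nat.lt_succ_iff.1 (Finset.mem_range.1 hm))), mul_zero],
    zero_add]
  -- `(j + n + 1)² ≥ (n + 1)² + j`, so the tail is dominated by a geometric series
  calc ∑' j, 2⁻¹ ^ ((j + (n + 1)) ^ 2) * A.indicator 1 (z (j + (n + 1)))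
      ≤ ∑' j : ℕ, (2⁻¹ : ℝ≥0∞) ^ (n ^ 2 + 2 * n + 1) * 2⁻¹ ^ j := by
        refine ENNReal.tsum_le_tsum fun j => ?_
        calc (2⁻¹ : ℝ≥0∞) ^ ((j + (n + 1)) ^ 2) * A.indicator 1 (z (j + (n + 1)))
            ≤ 2⁻¹ ^ ((j + (n + 1)) ^ 2) :=
              mul_le_of_le_one_right' (indicator_le_self' (fun _ _ => zero_le) _)
          _ ≤ 2⁻¹ ^ (n ^ 2 + 2 * n + 1 + j) :=
              pow_le_pow_of_le_one zero_le (by norm_num) (by nlinarith)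
          _ = 2⁻¹ ^ (n ^ 2 + 2 * n + 1) * 2⁻¹ ^ j := pow_add ..
    _ = 2⁻¹ ^ (2 * n) * 2⁻¹ ^ (n ^ 2) := by
        rw [ENNReal.tsum_mul_left, ENNReal.tsum_geometric, ENNReal.one_sub_inv_two, inv_inv,
          pow_succ, mul_assoc, ENNReal.inv_mul_cancel two_ne_zero ENNReal.ofNat_ne_top, mul_one,
          ← pow_add, add_comm]

lemma map_atomicMeasure {β : Type*} [MeasurableSpace β] {f : α → β} (hf : Measurable f) :
    (atomicMeasure z).map f = atomicMeasure (f ∘ z) := by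
  simp only [atomicMeasure, Measure.map_sum hf.aemeasurable, Measure.map_smul,
    Measure.map_dirac' hf, Function.comp_apply]

end AtomicMeasure

section AtomicScenery

variable {z : ℕ → ℝ} {x : ℝ}

lemma memSupp_atomicMeasure (h : ∀ ε > 0, ∃ n, |z n - x| < ε) :
    MemSupp (atomicMeasure z) x := by
  intro ε hε
  obtain ⟨n, hn⟩ := h ε hε
  obtain ⟨h₁, h₂⟩ := abs_lt.1 hn
  have hmem : z n ∈ Ioo (x - ε) (x + ε) := ⟨by linarith, by linarith⟩
  exact (ENNReal.pow_pos (by norm_num) _).trans_le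
    (inv_two_pow_sq_le_atomicMeasure measurableSet_Ioo hmem)

lemma scenery_atomicMeasure_le {t : ℝ} {n : ℕ} (hn : |z n - x| ≤ Real.exp (-t))
    (hfirst : ∀ m < n, Real.exp (-t) < |z m - x|) {A : Set I01}
    (hA : ∀ a ∈ A, x + Real.exp (-t) * a ≠ z n) :
    (scenery (atomicMeasure z) x t : Measure I01) A ≤ 2⁻¹ ^ (2 * n) := by
  have hW := inv_two_pow_sq_le_atomicMeasure (A := window x 1 t) measurableSet_Icc
    ((mem_window_one_iff x t).2 hn)
  have hW₀ : atomicMeasure z (window x 1 t) ≠ 0 :=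
    ((ENNReal.pow_pos (by norm_num) _).trans_le hW).ne'
  rw [scenery_apply_of_ne_zero hW₀, ENNReal.inv_mul_le_iff hW₀ (measure_ne_top _ _)]
  have hsub : (fun a : I01 => x + Real.exp (-t) * a) '' A ⊆ window x 1 t \ {z n} := by
    rintro _ ⟨a, ha, rfl⟩
    exact ⟨range_scenery x t ▸ mem_range_self a, hA a ha⟩
  calc atomicMeasure z ((fun a : I01 => x + Real.exp (-t) * a) '' A)
      ≤ atomicMeasure z (window x 1 t \ {z n}) := measure_mono hsub
    _ ≤ 2⁻¹ ^ (2 * n) * 2⁻¹ ^ (n ^ 2) := by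
        refine atomicMeasure_le_of_forall_le_notMem (measurableSet_Icc.diff
          (measurableSet_singleton _)) fun m hm hmem => ?_
        rcases hm.lt_or_eq with hm | rfl
        · exact (hfirst m hm).not_ge ((mem_window_one_iff x t).1 hmem.1)
        · exact hmem.2 rfl
    _ ≤ _ := by rw [mul_comm]; gcongr

theorem tendsto_scenery_atomicMeasure {c : ℝ} (hc : c ∈ I01)
    (h : ∀ δ > 0, ∀ N : ℕ, ∀ᶠ t in atTop, ∃ n ≥ N, |z n - x| ≤ Real.exp (-t) ∧
      (∀ m < n, Real.exp (-t) < |z m - x|) ∧ |Real.exp t * (z n - x) - c| < δ) :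
    Tendsto (scenery (atomicMeasure z) x) atTop (𝓝 (diracProba ⟨c, hc⟩)) := by
  refine tendsto_diracProba_of_tendsto_compl fun U hU =>
    ENNReal.tendsto_nhds_zero.2 fun ε hε => ?_
  obtain ⟨δ, hδ, hball⟩ := Metric.mem_nhds_iff.1 hU
  obtain ⟨N, hN⟩ := ENNReal.exists_inv_two_pow_lt hε.ne'
  filter_upwards [h δ hδ N] with t ⟨n, hnN, hn, hfirst, hnear⟩
  refine (scenery_atomicMeasure_le hn hfirst fun a ha hza => absurd (hball ?_) ha).trans ?_
  · rwa [← hza, add_sub_cancel_left, ← mul_assoc, ← Real.exp_add, add_neg_cancel, Real.exp_zero,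
      one_mul] at hnear
  · exact (pow_le_pow_of_le_one zero_le (by norm_num) (by omega)).trans hN.le

end AtomicScenery

section FirstAtom

variable {s : ℕ → ℝ}

lemma tendsto_succ_div_self_of_sub_le_sq (hs_pos : ∀ k, 0 < s k) (hs : Tendsto s atTop (𝓝 0))
    (hanti : Antitone s) {C : ℝ} (hsub : ∀ k, s k - s (k + 1) ≤ C * s k ^ 2) :
    Tendsto (fun k => s (k + 1) / s k) atTop (𝓝 1) := by
  have hlower : Tendsto (fun k => 1 - C * s k) atTop (𝓝 1) := by
    simpa using (hs.const_mul C).const_sub 1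
  refine tendsto_of_tendsto_of_tendsto_of_le_of_le hlower tendsto_const_nhds (fun k => ?_)
    fun k => (div_le_one (hs_pos k)).2 (hanti k.le_succ)
  rw [le_div_iff₀ (hs_pos k)]
  linarith [hsub k, show (1 - C * s k) * s k = s k - C * s k ^ 2 by ring]

lemma eventually_exists_first_atom_near (hs_pos : ∀ k, 0 < s k) (hs : Tendsto s atTop (𝓝 0))
    (hratio : Tendsto (fun k => s (k + 1) / s k) atTop (𝓝 1)) {u : ℕ → ℝ} {g : ℕ → ℕ}
    (hg : StrictMono g) {σ : ℝ} (hσ : |σ| = 1) (hu : ∀ k, u (g k) = σ * s k)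
    (hgap : ∀ k, ∀ m < g (k + 1), s k ≤ |u m|) {δ : ℝ} (hδ : 0 < δ) (N : ℕ) :
    ∀ᶠ t in atTop, ∃ n ≥ N, |u n| ≤ Real.exp (-t) ∧ (∀ m < n, Real.exp (-t) < |u m|) ∧
      |Real.exp t * u n - σ| < δ := by
  obtain ⟨K, hK⟩ := eventually_atTop.1 (hratio.eventually_const_lt (sub_lt_self 1 hδ))
  have hlarge : ∀ᶠ t in atTop, ∀ j ∈ Finset.range (K + N + 1), Real.exp (-t) < s j :=
    (Finset.eventually_all _).2 fun j _ =>
      Real.tendsto_exp_neg_atTop_nhds_zero.eventually (gt_mem_nhds (hs_pos j))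
  filter_upwards [hlarge] with t ht
  set w := Real.exp (-t) with hw_def
  have hw : 0 < w := Real.exp_pos _
  obtain ⟨k, hkK, hk_le, hk_lt⟩ : ∃ k, K + N ≤ k ∧ s (k + 1) ≤ w ∧ w < s k := by
    have hex : ∃ k, s k ≤ w := (hs.eventually (eventually_le_nhds hw)).exists
    have hfind : K + N < Nat.find hex := by
      by_contra! hle
      exact (ht _ (Finset.mem_range.2 (Nat.lt_succ_of_le hle))).not_ge (Nat.find_spec hex)
    obtain ⟨k, hk⟩ : ∃ k, Nat.find hex = k + 1 := ⟨Nat.find hex - 1, by omega⟩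
    exact ⟨k, by omega, hk ▸ Nat.find_spec hex, not_le.1 (Nat.find_min hex (by omega))⟩
  have hratio_k : (1 - δ) * s k < s (k + 1) := (lt_div_iff₀ (hs_pos k)).1 (hK k (by omega))
  refine ⟨g (k + 1), (by omega : N ≤ k + 1).trans (hg.id_le _), ?_,
    fun m hm => hk_lt.trans_le (hgap k m hm), ?_⟩
  · rwa [hu, abs_mul, hσ, one_mul, abs_of_pos (hs_pos _)]
  · have hrel : 1 - δ < s (k + 1) / w := by
      rw [lt_div_iff₀ hw]
      rcases le_or_gt δ 1 with hδ1 | hδ1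
      · nlinarith
      · nlinarith [hs_pos (k + 1)]
    have hexp : Real.exp t = w⁻¹ := by rw [hw_def, Real.exp_neg, inv_inv]
    rw [hu, show Real.exp t * (σ * s (k + 1)) - σ = σ * (s (k + 1) / w - 1) by rw [hexp]; ring,
      abs_mul, hσ, one_mul, abs_sub_lt_iff]
    constructor <;> linarith [(div_le_one hw).2 hk_le]

end FirstAtom

namespace SceneryCounterexample

def bump (x : ℝ) : ℝ := x ^ 2 / (2 * (1 + x ^ 2))

def diffeo (x : ℝ) : ℝ := x + bump x

def scale (k : ℕ) : ℝ := k + 101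

def negAtom (k : ℕ) : ℝ := 3 / (2 * scale k)

def posAtom (k : ℕ) : ℝ := negAtom k - 1 / scale k ^ 3

def pushedNegAtom (k : ℕ) : ℝ := negAtom k - bump (negAtom k)

def atoms (n : ℕ) : ℝ := if Even n then posAtom (n / 2) else -negAtom (n / 2)

lemma bump_nonneg (x : ℝ) : 0 ≤ bump x := by unfold bump; positivity

lemma bump_le_sq_div_two (x : ℝ) : bump x ≤ x ^ 2 / 2 := by
  rw [bump, div_le_div_iff₀ (by positivity) (by norm_num)]
  nlinarith [sq_nonneg x]

lemma bump_le_half (x : ℝ) : bump x ≤ 1 / 2 := by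
  rw [bump, div_le_div_iff₀ (by positivity) (by norm_num)]
  nlinarith [sq_nonneg x]

lemma bump_lt_self {x : ℝ} (hx : 0 < x) : bump x < x := by
  rw [bump, div_lt_iff₀ (by positivity)]
  nlinarith [sq_nonneg x]

lemma bump_mono {x y : ℝ} (hx : 0 ≤ x) (hxy : x ≤ y) : bump x ≤ bump y := by
  rw [bump, bump, div_le_div_iff₀ (by positivity) (by positivity)]
  nlinarith

lemma sq_le_bump {x : ℝ} (hx : 0 ≤ x) (hx' : x ≤ 1 / 4) : 8 / 17 * x ^ 2 ≤ bump x := by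
  rw [bump, le_div_iff₀ (by positivity)]
  nlinarith [mul_nonneg (mul_nonneg (mul_nonneg (by linarith : (0 : ℝ) ≤ 1 - 4 * x)
    (by linarith : (0 : ℝ) ≤ 1 + 4 * x)) hx) hx]

lemma hasDerivAt_diffeo (x : ℝ) : HasDerivAt diffeo (1 + x / (1 + x ^ 2) ^ 2) x := by
  have hsq : HasDerivAt (fun y : ℝ => y ^ 2) (2 * x) x := by simpa using hasDerivAt_pow 2 x
  have hden : HasDerivAt (fun y : ℝ => 2 * (1 + y ^ 2)) (2 * (2 * x)) x := by
    simpa using ((hasDerivAt_const x (1 : ℝ)).add hsq).const_mul (2 : ℝ)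
  refine ((hasDerivAt_id x).add (hsq.div hden (by positivity))).congr_deriv ?_
  field_simp
  ring

lemma deriv_diffeo_pos (x : ℝ) : 0 < deriv diffeo x := by
  rw [(hasDerivAt_diffeo x).deriv, ← sub_pos]
  have : 0 < (1 + x ^ 2) ^ 2 + x := by nlinarith [sq_nonneg (x + 1), sq_nonneg (x ^ 2)]
  field_simp
  linarith

lemma contDiff_diffeo : ContDiff ℝ 1 diffeo :=
  contDiff_id.add ((contDiff_id.pow 2).div (by fun_prop) fun x => by positivity)

lemma strictMono_diffeo : StrictMono diffeo := strictMono_of_deriv_pos deriv_diffeo_pos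

lemma surjective_diffeo : Function.Surjective diffeo := fun y => by
  have hlow : diffeo (y - 1) ≤ y := by rw [diffeo]; linarith [bump_le_half (y - 1)]
  have hhigh : y ≤ diffeo y := le_add_of_nonneg_right (bump_nonneg y)
  obtain ⟨x, -, hx⟩ := intermediate_value_Icc (by linarith : y - 1 ≤ y)
    contDiff_diffeo.continuous.continuousOn ⟨hlow, hhigh⟩
  exact ⟨x, hx⟩

lemma isOPDiffeo_diffeo : IsOPDiffeo diffeo :=
  ⟨contDiff_diffeo, ⟨strictMono_diffeo.injective, surjective_diffeo⟩, deriv_diffeo_pos⟩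

lemma diffeo_zero : diffeo 0 = 0 := by simp [diffeo, bump]

lemma deriv_diffeo_zero : deriv diffeo 0 = 1 := by simp [(hasDerivAt_diffeo 0).deriv]

lemma diffeo_neg (x : ℝ) : diffeo (-x) = -(x - bump x) := by simp only [diffeo, bump]; ring

lemma diffeo_pos {x : ℝ} (hx : 0 < x) : 0 < diffeo x :=
  add_pos_of_pos_of_nonneg hx (bump_nonneg x)

lemma le_scale (k : ℕ) : (101 : ℝ) ≤ scale k := by
  rw [scale]; linarith [(Nat.cast_nonneg k : (0 : ℝ) ≤ k)]

lemma scale_pos (k : ℕ) : 0 < scale k := by linarith [le_scale k]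

lemma scale_succ (k : ℕ) : scale (k + 1) = scale k + 1 := by rw [scale, scale]; push_cast; ring

lemma negAtom_pos (k : ℕ) : 0 < negAtom k := by have := scale_pos k; rw [negAtom]; positivity

lemma negAtom_le (k : ℕ) : negAtom k ≤ 1 / 4 := by
  rw [negAtom, div_le_div_iff₀ (by linarith [scale_pos k]) (by norm_num)]
  linarith [le_scale k]

lemma tendsto_negAtom : Tendsto negAtom atTop (𝓝 0) := by
  have : Tendsto scale atTop atTop := tendsto_atTop_add_const_right _ _ tendsto_natCast_atTop_atTop
  exact tendsto_const_nhds.div_atTop (this.const_mul_atTop two_pos)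

lemma negAtom_sub_succ_le (k : ℕ) :
    negAtom k - negAtom (k + 1) ≤ 3 / 2 * (1 / scale k) ^ 2 := by
  have := scale_pos k
  rw [negAtom, negAtom, scale_succ, ← sub_nonneg]
  have e : 3 / 2 * (1 / scale k) ^ 2 - (3 / (2 * scale k) - 3 / (2 * (scale k + 1)))
      = 3 / (2 * scale k ^ 2 * (scale k + 1)) := by field_simp; ring
  rw [e]
  positivity

lemma inv_scale_le_posAtom (k : ℕ) : 1 / scale k ≤ posAtom k := by
  have := le_scale k
  rw [posAtom, negAtom, ← sub_nonneg]
  have e : 3 / (2 * scale k) - 1 / scale k ^ 3 - 1 / scale k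
      = (scale k ^ 2 / 2 - 1) / scale k ^ 3 := by
    field_simp; ring
  rw [e]
  apply div_nonneg _ (by positivity)
  nlinarith

lemma posAtom_pos (k : ℕ) : 0 < posAtom k :=
  (one_div_pos.2 (scale_pos k)).trans_le (inv_scale_le_posAtom k)

lemma posAtom_lt_negAtom (k : ℕ) : posAtom k < negAtom k := by
  have := scale_pos k
  rw [posAtom, sub_lt_self_iff]
  positivity

lemma negAtom_succ_lt_posAtom (k : ℕ) : negAtom (k + 1) < posAtom k := by
  have := le_scale k
  rw [posAtom, negAtom, negAtom, scale_succ, ← sub_pos]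
  have e : 3 / (2 * scale k) - 1 / scale k ^ 3 - 3 / (2 * (scale k + 1))
      = (3 / 2 * scale k ^ 2 - (scale k + 1)) / (scale k ^ 3 * (scale k + 1)) := by
    field_simp; ring
  rw [e]
  apply div_pos _ (by positivity)
  nlinarith

lemma strictAnti_negAtom : StrictAnti negAtom :=
  strictAnti_nat_of_succ_lt fun k => (negAtom_succ_lt_posAtom k).trans (posAtom_lt_negAtom k)

lemma strictAnti_posAtom : StrictAnti posAtom :=
  strictAnti_nat_of_succ_lt fun k => (posAtom_lt_negAtom (k + 1)).trans (negAtom_succ_lt_posAtom k)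

lemma diffeo_neg_negAtom (k : ℕ) : diffeo (-negAtom k) = -pushedNegAtom k := diffeo_neg _

lemma pushedNegAtom_pos (k : ℕ) : 0 < pushedNegAtom k :=
  sub_pos.2 (bump_lt_self (negAtom_pos k))

lemma pushedNegAtom_le_negAtom (k : ℕ) : pushedNegAtom k ≤ negAtom k :=
  sub_le_self _ (bump_nonneg _)

lemma inv_scale_le_pushedNegAtom (k : ℕ) : 1 / scale k ≤ pushedNegAtom k := by
  have := le_scale k
  have e : negAtom k - negAtom k ^ 2 / 2 - 1 / scale k
      = (scale k - 9 / 4) / (2 * scale k ^ 2) := by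
    rw [negAtom]; field_simp; ring
  have : 0 ≤ (scale k - 9 / 4) / (2 * scale k ^ 2) := div_nonneg (by linarith) (by positivity)
  rw [pushedNegAtom]
  linarith [bump_le_sq_div_two (negAtom k)]

lemma strictAnti_pushedNegAtom : StrictAnti pushedNegAtom := fun j k hjk => by
  have := strictMono_diffeo (neg_lt_neg (strictAnti_negAtom hjk))
  rwa [diffeo_neg_negAtom, diffeo_neg_negAtom, neg_lt_neg_iff] at this

lemma pushedNegAtom_lt_diffeo_posAtom_succ (k : ℕ) :
    pushedNegAtom k < diffeo (posAtom (k + 1)) := by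
  set K := scale k with hK_def
  have hK : 101 ≤ K := le_scale k
  have hlow_a : 1 / (K + 1) ≤ posAtom (k + 1) := scale_succ k ▸ inv_scale_le_posAtom (k + 1)
  have hgap : negAtom k - posAtom (k + 1) = 3 / (2 * K * (K + 1)) + 1 / (K + 1) ^ 3 := by
    rw [posAtom, negAtom, negAtom, scale_succ, ← hK_def]; field_simp; ring
  have hnum : 3 / (2 * K * (K + 1)) + 1 / (K + 1) ^ 3
      < 8 / 17 * ((3 / (2 * K)) ^ 2 + (1 / (K + 1)) ^ 2) := by
    rw [← sub_pos]
    have e : 8 / 17 * ((3 / (2 * K)) ^ 2 + (1 / (K + 1)) ^ 2)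
        - (3 / (2 * K * (K + 1)) + 1 / (K + 1) ^ 3)
        = (8 / 17 * (9 / 4 * (K + 1) ^ 3 + K ^ 2 * (K + 1)) - (3 / 2 * K * (K + 1) ^ 2 + K ^ 2))
          / (K ^ 2 * (K + 1) ^ 3) := by
      field_simp; ring
    rw [e]
    apply div_pos _ (by positivity)
    nlinarith
  have hbumps : 8 / 17 * ((3 / (2 * K)) ^ 2 + (1 / (K + 1)) ^ 2)
      ≤ bump (negAtom k) + bump (posAtom (k + 1)) := by
    have ha := (posAtom_pos (k + 1)).le
    have hsq : (1 / (K + 1)) ^ 2 ≤ posAtom (k + 1) ^ 2 :=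
      pow_le_pow_left₀ (by positivity) hlow_a 2
    linarith [sq_le_bump (negAtom_pos k).le (negAtom_le k),
      sq_le_bump ha ((posAtom_lt_negAtom _).le.trans (negAtom_le _)),
      show (3 / (2 * K)) ^ 2 = negAtom k ^ 2 from rfl]
  rw [pushedNegAtom, diffeo]
  linarith

lemma sub_succ_le_sq_of_inv_scale_le {s : ℕ → ℝ} (hlow : ∀ k, 1 / scale k ≤ s k)
    (hsub : ∀ k, s k - s (k + 1) ≤ negAtom k - negAtom (k + 1)) (k : ℕ) :
    s k - s (k + 1) ≤ 3 / 2 * s k ^ 2 := by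
  have := pow_le_pow_left₀ (one_div_pos.2 (scale_pos k)).le (hlow k) 2
  linarith [hsub k, negAtom_sub_succ_le k]

lemma tendsto_posAtom : Tendsto posAtom atTop (𝓝 0) :=
  squeeze_zero (fun k => (posAtom_pos k).le) (fun k => (posAtom_lt_negAtom k).le) tendsto_negAtom

lemma tendsto_pushedNegAtom : Tendsto pushedNegAtom atTop (𝓝 0) :=
  squeeze_zero (fun k => (pushedNegAtom_pos k).le) pushedNegAtom_le_negAtom tendsto_negAtom

lemma tendsto_posAtom_succ_div :
    Tendsto (fun k => posAtom (k + 1) / posAtom k) atTop (𝓝 1) := by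
  refine tendsto_succ_div_self_of_sub_le_sq posAtom_pos tendsto_posAtom
    strictAnti_posAtom.antitone (sub_succ_le_sq_of_inv_scale_le inv_scale_le_posAtom fun k => ?_)
  have := pow_le_pow_left₀ (one_div_pos.2 (scale_pos _)).le (one_div_le_one_div_of_le
    (scale_pos k) (by linarith [scale_succ k] : scale k ≤ scale (k + 1))) 3
  simp only [posAtom, one_div, inv_pow] at this ⊢
  linarith

lemma tendsto_pushedNegAtom_succ_div :
    Tendsto (fun k => pushedNegAtom (k + 1) / pushedNegAtom k) atTop (𝓝 1) := by
  refine tendsto_succ_div_self_of_sub_le_sq pushedNegAtom_pos tendsto_pushedNegAtom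
    strictAnti_pushedNegAtom.antitone
    (sub_succ_le_sq_of_inv_scale_le inv_scale_le_pushedNegAtom fun k => ?_)
  have := bump_mono (negAtom_pos (k + 1)).le (strictAnti_negAtom k.lt_succ_self).le
  rw [pushedNegAtom, pushedNegAtom]
  linarith

lemma atoms_two_mul (k : ℕ) : atoms (2 * k) = posAtom k := by simp [atoms]

lemma atoms_two_mul_add_one (k : ℕ) : atoms (2 * k + 1) = -negAtom k := by
  rw [atoms, if_neg (Nat.not_even_two_mul_add_one k), show (2 * k + 1) / 2 = k by omega]

lemma posAtom_le_abs_atoms {k m : ℕ} (hm : m < 2 * (k + 1)) : posAtom k ≤ |atoms m| := by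
  obtain ⟨j, rfl | rfl⟩ := Nat.even_or_odd' m
  · rw [atoms_two_mul, abs_of_pos (posAtom_pos j)]
    exact strictAnti_posAtom.antitone (by omega)
  · rw [atoms_two_mul_add_one, abs_neg, abs_of_pos (negAtom_pos j)]
    exact (strictAnti_posAtom.antitone (by omega)).trans (posAtom_lt_negAtom j).le

lemma pushedNegAtom_le_abs_diffeo_atoms {k m : ℕ} (hm : m < 2 * (k + 1) + 1) :
    pushedNegAtom k ≤ |diffeo (atoms m)| := by
  obtain ⟨j, rfl | rfl⟩ := Nat.even_or_odd' m
  · rw [atoms_two_mul, abs_of_pos (diffeo_pos (posAtom_pos j))]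
    exact (pushedNegAtom_lt_diffeo_posAtom_succ k).le.trans
      (strictMono_diffeo.monotone (strictAnti_posAtom.antitone (by omega)))
  · rw [atoms_two_mul_add_one, diffeo_neg_negAtom, abs_neg, abs_of_pos (pushedNegAtom_pos j)]
    exact strictAnti_pushedNegAtom.antitone (by omega)

lemma memSupp_atomicMeasure_atoms : MemSupp (atomicMeasure atoms) 0 :=
  memSupp_atomicMeasure fun ε hε =>
    let ⟨k, hk⟩ := (tendsto_posAtom.eventually (gt_mem_nhds hε)).exists
    ⟨2 * k, by rwa [atoms_two_mul, sub_zero, abs_of_pos (posAtom_pos k)]⟩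

lemma tendsto_scenery_atoms :
    Tendsto (scenery (atomicMeasure atoms) 0) atTop (𝓝 (diracProba ⟨1, by norm_num⟩)) :=
  tendsto_scenery_atomicMeasure _ fun δ hδ N => by
    simpa only [sub_zero] using eventually_exists_first_atom_near posAtom_pos tendsto_posAtom
      tendsto_posAtom_succ_div (strictMono_mul_left_of_pos two_pos) abs_one
      (fun k => (atoms_two_mul k).trans (one_mul _).symm) (fun k m hm => posAtom_le_abs_atoms hm)
      hδ N

lemma tendsto_scenery_map_diffeo_atoms :
    Tendsto (scenery ((atomicMeasure atoms).map diffeo) 0) atTop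
      (𝓝 (diracProba ⟨-1, by norm_num⟩)) := by
  rw [map_atomicMeasure contDiff_diffeo.continuous.measurable]
  refine tendsto_scenery_atomicMeasure _ fun δ hδ N => ?_
  simpa only [sub_zero, Function.comp_apply] using eventually_exists_first_atom_near
    pushedNegAtom_pos tendsto_pushedNegAtom tendsto_pushedNegAtom_succ_div
    (u := diffeo ∘ atoms) (g := fun k => 2 * k + 1)
    (fun j k hjk => by dsimp only; omega) (by norm_num : |(-1 : ℝ)| = 1)
    (fun k => by simp [atoms_two_mul_add_one, diffeo_neg_negAtom])
    (fun k m hm => pushedNegAtom_le_abs_diffeo_atoms hm) hδ N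

end SceneryCounterexample

/-- Example 5: there are a Radon measure `μ` with `0 ∈ supp μ` and an
orientation-preserving `C¹` diffeomorphism `f` with `f(0) = 0`, `f'(0) = 1` such
that `μ_{0,t} → δ_1` and `(fμ)_{0,t} → δ_{-1}` weak-* as `t → ∞`. -/
theorem exists_scenery_dirac_one_pushforward_dirac_neg_one :
    ∃ μ : Measure ℝ, IsLocallyFiniteMeasure μ ∧ MemSupp μ 0 ∧
      ∃ f : ℝ → ℝ, IsOPDiffeo f ∧ f 0 = 0 ∧ deriv f 0 = 1 ∧
        (∀ φ : C(I01, ℝ),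
          Tendsto (fun t : ℝ => ∫ a, φ a ∂(scenery μ 0 t : Measure I01))
            atTop (𝓝 (φ ⟨1, by norm_num⟩))) ∧
        (∀ φ : C(I01, ℝ),
          Tendsto (fun t : ℝ => ∫ a, φ a ∂(scenery (Measure.map f μ) 0 t : Measure I01))
            atTop (𝓝 (φ ⟨-1, by norm_num⟩))) := by
  open SceneryCounterexample in
  exact ⟨atomicMeasure atoms, inferInstance, memSupp_atomicMeasure_atoms, diffeo,
    isOPDiffeo_diffeo, diffeo_zero, deriv_diffeo_zero,
    tendsto_integral_of_tendsto_diracProba tendsto_scenery_atoms,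
    tendsto_integral_of_tendsto_diracProba tendsto_scenery_map_diffeo_atoms⟩
end
end
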